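/- arXiv:2204.11522 — 12 statements merged into one kernel-verified Lean document; each statement's English description precedes it below -/
import Mathlib

section
/- Let H be a symmetric real l-by-l matrix and M a real l-by-l matrix, and set Q = HM and G = Q^T + Q - M^T H M. If v^{k+1} = v^k - M(v^k - ṽ^k) for vectors v^k, ṽ^k, v^{k+1} in R^l, then ‖v^k - ṽ^k‖_H^2 - ‖v^{k+1} - ṽ^k‖_H^2 = ‖v^k - ṽ^k‖_G^2. -/
open Matrix

/-- With `Q = HM`, `G = Qᵀ + Q - MᵀHM` and the correction
`v^{k+1} = v^k - M (v^k - ṽ^k)`, one has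
`‖v^k - ṽ^k‖_H² - ‖v^{k+1} - ṽ^k‖_H² = ‖v^k - ṽ^k‖_G²`. -/
theorem stmt2 (l : ℕ) (H M : Matrix (Fin l) (Fin l) ℝ) (hH : Hᵀ = H)
    (Q G : Matrix (Fin l) (Fin l) ℝ) (hQ : Q = H * M)
    (hG : G = Qᵀ + Q - Mᵀ * H * M)
    (vk vt vk1 : Fin l → ℝ) (hupd : vk1 = vk - M *ᵥ (vk - vt)) :
    (vk - vt) ⬝ᵥ (H *ᵥ (vk - vt)) - (vk1 - vt) ⬝ᵥ (H *ᵥ (vk1 - vt))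
      = (vk - vt) ⬝ᵥ (G *ᵥ (vk - vt)) := by
  subst hQ hG hupd
  set d := vk - vt with hd
  have h1 : vk - M *ᵥ d - vt = d - M *ᵥ d := by
    rw [hd]; abel
  rw [h1]
  simp only [mulVec_sub, dotProduct_sub, sub_dotProduct, add_mulVec, sub_mulVec,
    dotProduct_add, transpose_mul, hH, ← mulVec_mulVec]
  have h2 : ∀ u w : Fin l → ℝ, u ⬝ᵥ (H *ᵥ w) = w ⬝ᵥ (H *ᵥ u) := by
    intro u w
    nth_rewrite 1 [← hH]
    rw [dotProduct_mulVec u, vecMul_transpose, dotProduct_comm]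
  have h3 : d ⬝ᵥ Mᵀ *ᵥ H *ᵥ M *ᵥ d = M *ᵥ d ⬝ᵥ H *ᵥ M *ᵥ d := by
    rw [dotProduct_mulVec, vecMul_transpose]
  have h4 : d ⬝ᵥ Mᵀ *ᵥ H *ᵥ d = M *ᵥ d ⬝ᵥ H *ᵥ d := by
    rw [dotProduct_mulVec, vecMul_transpose]
  rw [h3, h4, h2 d (M *ᵥ d)]
  ring
end

section
/- Let H be a symmetric positive definite real l-by-l matrix, M a real l-by-l matrix, and set Q = HM and G = Q^T + Q - M^T H M. Suppose v^k, ṽ^k, v^*, v^{k+1} are vectors in R^l with v^{k+1} = v^k - M(v^k - ṽ^k), and suppose (v^k - v^{k+1})^T H (ṽ^k - v^*) ≥ 0. Then ‖v^{k+1} - v^*‖_H^2 ≤ ‖v^k - v^*‖_H^2 - ‖v^k - ṽ^k‖_G^2. -/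
open Matrix

/-- The contraction inequality: if `H` is symmetric positive definite, `Q = HM`,
`G = Qᵀ + Q - MᵀHM`, `v^{k+1} = v^k - M(v^k - ṽ^k)` and
`(v^k - v^{k+1})ᵀ H (ṽ^k - v^*) ≥ 0`, then
`‖v^{k+1} - v^*‖_H² ≤ ‖v^k - v^*‖_H² - ‖v^k - ṽ^k‖_G²`. -/
theorem stmt3 (l : ℕ) (H M : Matrix (Fin l) (Fin l) ℝ)
    (hHsym : Hᵀ = H) (hHpos : ∀ x : Fin l → ℝ, x ≠ 0 → 0 < x ⬝ᵥ (H *ᵥ x))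
    (Q G : Matrix (Fin l) (Fin l) ℝ) (hQ : Q = H * M)
    (hG : G = Qᵀ + Q - Mᵀ * H * M)
    (vk vt vs vk1 : Fin l → ℝ) (hupd : vk1 = vk - M *ᵥ (vk - vt))
    (hineq : 0 ≤ (vk - vk1) ⬝ᵥ (H *ᵥ (vt - vs))) :
    (vk1 - vs) ⬝ᵥ (H *ᵥ (vk1 - vs))
      ≤ (vk - vs) ⬝ᵥ (H *ᵥ (vk - vs)) - (vk - vt) ⬝ᵥ (G *ᵥ (vk - vt)) := by
  have sym : ∀ x y : Fin l → ℝ, x ⬝ᵥ (H *ᵥ y) = y ⬝ᵥ (H *ᵥ x) := by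
    intro x y
    rw [dotProduct_mulVec, ← hHsym, vecMul_transpose, dotProduct_comm, hHsym]
  set d := vk - vt with hd
  set u := vk - vs with hu
  have h1 : vk1 - vs = u - M *ᵥ d := by rw [hupd, hu]; abel
  have h2 : vk - vk1 = M *ᵥ d := by rw [hupd]; abel
  have h3 : vt - vs = u - d := by rw [hu, hd]; abel
  rw [h1, hG, hQ]
  rw [h2, h3] at hineq
  have e1 : d ⬝ᵥ (((H * M)ᵀ + H * M - Mᵀ * H * M) *ᵥ d)
      = d ⬝ᵥ ((H * M)ᵀ *ᵥ d) + d ⬝ᵥ ((H * M) *ᵥ d) - d ⬝ᵥ ((Mᵀ * (H * M)) *ᵥ d) := by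
    rw [Matrix.mul_assoc]
    simp [sub_mulVec, add_mulVec, dotProduct_sub, dotProduct_add]
  have e2 : d ⬝ᵥ ((H * M)ᵀ *ᵥ d) = (M *ᵥ d) ⬝ᵥ (H *ᵥ d) := by
    rw [dotProduct_mulVec, vecMul_transpose, ← mulVec_mulVec, dotProduct_comm,
      sym d (M *ᵥ d)]
  have e3 : d ⬝ᵥ ((H * M) *ᵥ d) = d ⬝ᵥ (H *ᵥ (M *ᵥ d)) := by rw [← mulVec_mulVec]
  have e4 : d ⬝ᵥ ((Mᵀ * (H * M)) *ᵥ d) = (M *ᵥ d) ⬝ᵥ (H *ᵥ (M *ᵥ d)) := by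
    rw [← mulVec_mulVec, ← mulVec_mulVec, dotProduct_mulVec, vecMul_transpose]
  have lhs : (u - M *ᵥ d) ⬝ᵥ (H *ᵥ (u - M *ᵥ d))
      = u ⬝ᵥ (H *ᵥ u) - u ⬝ᵥ (H *ᵥ (M *ᵥ d)) - (M *ᵥ d) ⬝ᵥ (H *ᵥ u)
        + (M *ᵥ d) ⬝ᵥ (H *ᵥ (M *ᵥ d)) := by
    simp [mulVec_sub, dotProduct_sub, sub_dotProduct]
    ring
  have hin : (M *ᵥ d) ⬝ᵥ (H *ᵥ (u - d)) = (M *ᵥ d) ⬝ᵥ (H *ᵥ u) - (M *ᵥ d) ⬝ᵥ (H *ᵥ d) := by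
    simp [mulVec_sub, dotProduct_sub]
  rw [hin] at hineq
  have s1 := sym u (M *ᵥ d)
  have s2 := sym d (M *ᵥ d)
  rw [lhs, e1, e2, e3, e4]
  linarith
end

section
/- Consider the variational inequality associated with the linearly constrained convex program min{θ(u) : Au = b, u ∈ U}: with Ω = U × R^m and F(u, λ) = (-A^Tλ, Au - b), a point w^* = (u^*, λ^*) ∈ Ω is a solution if θ(u) - θ(u^*) + (w - w^*)^T F(w^*) ≥ 0 for all w = (u, λ) ∈ Ω. Let P be a real d-by-(n+m) matrix, let Q, M be real d-by-d matrices, and suppose there exists a symmetric positive definite d-by-d matrix H with HM = Q, and set G = Q^T + Q - M^T H M and assume G is positive definite. Suppose θ : R^n → R is convex, U ⊆ R^n is convex, w̃^k = (ũ^k, λ̃^k) ∈ Ω and v^k ∈ R^d satisfy the prediction inequality θ(u) - θ(ũ^k) + (w - w̃^k)^T F(w̃^k) ≥ (Pw - Pw̃^k)^T Q (v^k - Pw̃^k) for all w ∈ Ω, and suppose v^{k+1} = v^k - M(v^k - Pw̃^k). Then for every solution w^* of the variational inequality, ‖v^{k+1} - Pw^*‖_H^2 ≤ ‖v^k - Pw^*‖_H^2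 - ‖v^k - Pw̃^k‖_G^2. -/
open Matrix

/-- Main contraction theorem for the prediction-correction framework applied to the
variational inequality reformulation of `min {θ(u) : Au = b, u ∈ U}`:
if the predictor `w̃^k = (ũ^k, λ̃^k) ∈ Ω = U × ℝ^m` satisfies the prediction
inequality with matrix `Q`, the corrector is `v^{k+1} = v^k - M(v^k - P w̃^k)`,
`H ≻ 0` satisfies `HM = Q`, and `G = Qᵀ + Q - MᵀHM ≻ 0`, then for every solution
`w^* = (u^*, λ^*)` of the variational inequality,
`‖v^{k+1} - Pw^*‖_H² ≤ ‖v^k - Pw^*‖_H² - ‖v^k - Pw̃^k‖_G²`. -/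
theorem stmt5 (n m d : ℕ) (A : Matrix (Fin m) (Fin n) ℝ) (b : Fin m → ℝ)
    (θ : (Fin n → ℝ) → ℝ) (hθ : ConvexOn ℝ Set.univ θ)
    (U : Set (Fin n → ℝ)) (hU : Convex ℝ U)
    (P : Matrix (Fin d) (Fin n ⊕ Fin m) ℝ)
    (Q M H G : Matrix (Fin d) (Fin d) ℝ)
    (hHsym : Hᵀ = H) (hHpos : ∀ x : Fin d → ℝ, x ≠ 0 → 0 < x ⬝ᵥ (H *ᵥ x))
    (hHM : H * M = Q)
    (hG : G = Qᵀ + Q - Mᵀ * H * M)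
    (hGpos : ∀ x : Fin d → ℝ, x ≠ 0 → 0 < x ⬝ᵥ (G *ᵥ x))
    (ut : Fin n → ℝ) (lt : Fin m → ℝ) (hut : ut ∈ U)
    (vk vk1 : Fin d → ℝ)
    (hpred : ∀ u ∈ U, ∀ lam : Fin m → ℝ,
      θ u - θ ut + ((u - ut) ⬝ᵥ (-(Aᵀ *ᵥ lt)) + (lam - lt) ⬝ᵥ (A *ᵥ ut - b))
        ≥ (P *ᵥ Sum.elim u lam - P *ᵥ Sum.elim ut lt) ⬝ᵥ
            (Q *ᵥ (vk - P *ᵥ Sum.elim ut lt)))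
    (hcorr : vk1 = vk - M *ᵥ (vk - P *ᵥ Sum.elim ut lt)) :
    ∀ (us : Fin n → ℝ) (ls : Fin m → ℝ), us ∈ U →
      (∀ u ∈ U, ∀ lam : Fin m → ℝ,
        θ u - θ us + ((u - us) ⬝ᵥ (-(Aᵀ *ᵥ ls)) + (lam - ls) ⬝ᵥ (A *ᵥ us - b)) ≥ 0) →
      (vk1 - P *ᵥ Sum.elim us ls) ⬝ᵥ (H *ᵥ (vk1 - P *ᵥ Sum.elim us ls))
        ≤ (vk - P *ᵥ Sum.elim us ls) ⬝ᵥ (H *ᵥ (vk - P *ᵥ Sum.elim us ls))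
          - (vk - P *ᵥ Sum.elim ut lt) ⬝ᵥ (G *ᵥ (vk - P *ᵥ Sum.elim ut lt)) := by

  intro us ls hus hsol
  set pt := P *ᵥ Sum.elim ut lt with hpt
  set ps := P *ᵥ Sum.elim us ls with hps
  have hAt : ∀ (x : Fin n → ℝ) (y : Fin m → ℝ), x ⬝ᵥ (Aᵀ *ᵥ y) = (A *ᵥ x) ⬝ᵥ y := by
    intro x y
    rw [Matrix.dotProduct_mulVec, Matrix.vecMul_transpose]
  have hsymdot : ∀ x y : Fin d → ℝ, x ⬝ᵥ (H *ᵥ y) = y ⬝ᵥ (H *ᵥ x) := by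
    intro x y
    rw [Matrix.dotProduct_mulVec]
    conv_lhs => rw [← hHsym]
    rw [Matrix.vecMul_transpose, dotProduct_comm]
  have key : 0 ≤ (pt - ps) ⬝ᵥ (Q *ᵥ (vk - pt)) := by
    have h1 := hpred us hus ls
    have h2 := hsol ut hut lt
    have hL : ((us - ut) ⬝ᵥ (-(Aᵀ *ᵥ lt)) + (ls - lt) ⬝ᵥ (A *ᵥ ut - b))
        + ((ut - us) ⬝ᵥ (-(Aᵀ *ᵥ ls)) + (lt - ls) ⬝ᵥ (A *ᵥ us - b)) = 0 := by
      simp only [dotProduct_neg, hAt, Matrix.mulVec_sub, sub_dotProduct,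
        dotProduct_sub]
      simp only [dotProduct_comm (A *ᵥ us), dotProduct_comm (A *ᵥ ut)]
      ring
    have hflip : (ps - pt) ⬝ᵥ (Q *ᵥ (vk - pt)) = -((pt - ps) ⬝ᵥ (Q *ᵥ (vk - pt))) := by
      rw [← neg_dotProduct, neg_sub]
    rw [hflip] at h1
    linarith
  set a := vk - pt with ha
  set e := vk - ps with he
  have hva : vk1 - ps = e - M *ᵥ a := by
    rw [hcorr, sub_right_comm]
  -- expand LHS
  have hHMa : H *ᵥ (M *ᵥ a) = Q *ᵥ a := by
    rw [Matrix.mulVec_mulVec, hHM]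
  have hlhs : (vk1 - ps) ⬝ᵥ (H *ᵥ (vk1 - ps))
      = e ⬝ᵥ (H *ᵥ e) - 2 * (e ⬝ᵥ (Q *ᵥ a)) + (M *ᵥ a) ⬝ᵥ (H *ᵥ (M *ᵥ a)) := by
    rw [hva]
    simp only [Matrix.mulVec_sub, sub_dotProduct, dotProduct_sub]
    rw [hsymdot (M *ᵥ a) e, hHMa]
    ring
  have hGa : a ⬝ᵥ (G *ᵥ a)
      = 2 * (a ⬝ᵥ (Q *ᵥ a)) - (M *ᵥ a) ⬝ᵥ (H *ᵥ (M *ᵥ a)) := by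
    rw [hG]
    simp only [Matrix.sub_mulVec, Matrix.add_mulVec, dotProduct_sub,
      dotProduct_add]
    have hQt : a ⬝ᵥ (Qᵀ *ᵥ a) = a ⬝ᵥ (Q *ᵥ a) := by
      rw [Matrix.dotProduct_mulVec, Matrix.vecMul_transpose, dotProduct_comm]
    have hMtM : a ⬝ᵥ ((Mᵀ * H * M) *ᵥ a) = (M *ᵥ a) ⬝ᵥ (H *ᵥ (M *ᵥ a)) := by
      rw [Matrix.mul_assoc Mᵀ H M, ← Matrix.mulVec_mulVec,
        Matrix.dotProduct_mulVec, Matrix.vecMul_transpose, ← Matrix.mulVec_mulVec,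
        Matrix.dotProduct_mulVec (M *ᵥ a), ← hHsym, Matrix.vecMul_transpose]
    rw [hQt, hMtM]
    ring
  have hea : e - a = pt - ps := by rw [he, ha]; abel
  have hdiff : e ⬝ᵥ (Q *ᵥ a) - a ⬝ᵥ (Q *ᵥ a) = (pt - ps) ⬝ᵥ (Q *ᵥ a) := by
    rw [← sub_dotProduct, hea]
  rw [hlhs, hGa]
  linarith
end

section
/- (Prediction representation of the strictly contractive Peaceman–Rachford splitting method.) Let θ₁ : R^{n₁} → R and θ₂ : R^{n₂} → R be convex, let X ⊆ R^{n₁} and Y ⊆ R^{n₂} be convex sets, let A be m-by-n₁, B be m-by-n₂, b ∈ R^m, β > 0, and μ ∈ R. Given y^k ∈ R^{n₂} and λ^k ∈ R^m, suppose: x̃^k ∈ X minimizes x ↦ θ₁(x) - λ^{kT}(Ax + By^k - b) + (β/2)‖Ax + By^k - b‖² over X; λ̃^k = λ^k - β(Ax̃^k + By^k - b); λ^{k+1/2} = λ^k - μβ(Ax̃^k + By^k - b); and ỹ^k ∈ Y minimizes y ↦ θ₂(y) - (λ^{k+1/2})^T(Ax̃^k + By - b) + (β/2)‖Ax̃^k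 + By - b‖² over Y. Then for all x ∈ X, y ∈ Y, λ ∈ R^m: [θ₁(x) + θ₂(y)] - [θ₁(x̃^k) + θ₂(ỹ^k)] + (x - x̃^k)^T(-A^Tλ̃^k) + (y - ỹ^k)^T(-B^Tλ̃^k) + (λ - λ̃^k)^T(Ax̃^k + Bỹ^k - b) ≥ (y - ỹ^k)^T[β B^T B (y^k - ỹ^k) - μ B^T(λ^k - λ̃^k)] + (λ - λ̃^k)^T[-B(y^k - ỹ^k) + (1/β)(λ^k - λ̃^k)]. -/
open Matrix

/-- Variational inequality for a minimizer of `θ + (quadratic penalty)` over a convex set. -/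
lemma vi_helper {n m : ℕ} {θ : (Fin n → ℝ) → ℝ} (hθ : ConvexOn ℝ Set.univ θ)
    {S : Set (Fin n → ℝ)} (hS : Convex ℝ S)
    (M : Matrix (Fin m) (Fin n) ℝ) (c l : Fin m → ℝ) (β : ℝ) (hβ : 0 < β)
    {u : Fin n → ℝ} (hu : u ∈ S)
    (hmin : ∀ x ∈ S,
      θ u - l ⬝ᵥ (M *ᵥ u + c) + β / 2 * ((M *ᵥ u + c) ⬝ᵥ (M *ᵥ u + c))
        ≤ θ x - l ⬝ᵥ (M *ᵥ x + c) + β / 2 * ((M *ᵥ x + c) ⬝ᵥ (M *ᵥ x + c))) :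
    ∀ x ∈ S, 0 ≤ θ x - θ u + (β • (M *ᵥ u + c) - l) ⬝ᵥ (M *ᵥ (x - u)) := by
  intro x hx
  set w := M *ᵥ u + c with hw
  set d := M *ᵥ (x - u) with hd
  have hDd : 0 ≤ d ⬝ᵥ d := Finset.sum_nonneg fun i _ => mul_self_nonneg _
  have hsub : (β • w - l) ⬝ᵥ d = β * (w ⬝ᵥ d) - l ⬝ᵥ d := by
    rw [sub_dotProduct, smul_dotProduct, smul_eq_mul]
  rw [hsub]
  set C := θ x - θ u + (β * (w ⬝ᵥ d) - l ⬝ᵥ d) with hC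
  set D := β / 2 * (d ⬝ᵥ d) with hD2
  have hD : 0 ≤ D := mul_nonneg (by linarith) hDd
  have key : ∀ t : ℝ, 0 < t → t ≤ 1 → 0 ≤ C + t * D := by
    intro t ht ht1
    have e : (1 - t) • u + t • x = u + t • (x - u) := by module
    have hmem : u + t • (x - u) ∈ S := by
      have h := hS hu hx (show (0:ℝ) ≤ 1 - t by linarith) ht.le (by ring)
      rwa [e] at h
    have hcv : θ (u + t • (x - u)) ≤ θ u + t * (θ x - θ u) := by
      have h := hθ.2 (Set.mem_univ u) (Set.mem_univ x)
        (show (0:ℝ) ≤ 1 - t by linarith) ht.le (by ring)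
      rw [e] at h
      simp only [smul_eq_mul] at h
      nlinarith [h]
    have hm := hmin _ hmem
    have hmv : M *ᵥ (u + t • (x - u)) + c = w + t • d := by
      rw [Matrix.mulVec_add, Matrix.mulVec_smul, hw, hd]; abel
    rw [hmv] at hm
    have e1 : l ⬝ᵥ (w + t • d) = l ⬝ᵥ w + t * (l ⬝ᵥ d) := by
      rw [dotProduct_add, dotProduct_smul, smul_eq_mul]
    have e2 : (w + t • d) ⬝ᵥ (w + t • d)
        = w ⬝ᵥ w + 2 * t * (w ⬝ᵥ d) + t ^ 2 * (d ⬝ᵥ d) := by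
      simp only [dotProduct_add, add_dotProduct, smul_dotProduct,
        dotProduct_smul, smul_eq_mul, dotProduct_comm d w]
      ring
    rw [e1, e2] at hm
    have h0 : 0 ≤ t * C + t ^ 2 * D := by rw [hC, hD2]; nlinarith [hm, hcv]
    nlinarith [h0, ht]
  by_contra hcon
  push_neg at hcon
  have ht0 : 0 < min 1 (-C / (2 * D + 1)) :=
    lt_min one_pos (div_pos (by linarith) (by linarith))
  have hk := key _ ht0 (min_le_left _ _)
  have h1 : min 1 (-C / (2 * D + 1)) * D ≤ (-C / (2 * D + 1)) * D :=
    mul_le_mul_of_nonneg_right (min_le_right _ _) hD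
  have h2 : (-C / (2 * D + 1)) * D ≤ -C / 2 := by
    rw [div_mul_eq_mul_div, div_le_div_iff₀ (by linarith) (by norm_num)]
    nlinarith
  linarith

/-- Prediction representation of the strictly contractive Peaceman–Rachford
splitting method (SC-PRSM): one SC-PRSM sweep produces `(x̃^k, ỹ^k, λ̃^k)`
satisfying the variational-inequality prediction inequality with matrix
`Q = [[βBᵀB, -μBᵀ], [-B, (1/β)I]]` acting on `v = (y, λ)`. -/
theorem stmt6 (n₁ n₂ m : ℕ)
    (θ₁ : (Fin n₁ → ℝ) → ℝ) (θ₂ : (Fin n₂ → ℝ) → ℝ)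
    (hθ₁ : ConvexOn ℝ Set.univ θ₁) (hθ₂ : ConvexOn ℝ Set.univ θ₂)
    (X : Set (Fin n₁ → ℝ)) (Y : Set (Fin n₂ → ℝ))
    (hX : Convex ℝ X) (hY : Convex ℝ Y)
    (A : Matrix (Fin m) (Fin n₁) ℝ) (B : Matrix (Fin m) (Fin n₂) ℝ) (b : Fin m → ℝ)
    (β μ : ℝ) (hβ : 0 < β)
    (yk : Fin n₂ → ℝ) (lk : Fin m → ℝ)
    (xt : Fin n₁ → ℝ) (yt : Fin n₂ → ℝ) (lt lh : Fin m → ℝ)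
    (hxtX : xt ∈ X)
    (hxt : ∀ x ∈ X,
      θ₁ xt - lk ⬝ᵥ (A *ᵥ xt + B *ᵥ yk - b)
        + β / 2 * ((A *ᵥ xt + B *ᵥ yk - b) ⬝ᵥ (A *ᵥ xt + B *ᵥ yk - b))
      ≤ θ₁ x - lk ⬝ᵥ (A *ᵥ x + B *ᵥ yk - b)
        + β / 2 * ((A *ᵥ x + B *ᵥ yk - b) ⬝ᵥ (A *ᵥ x + B *ᵥ yk - b)))
    (hlt : lt = lk - β • (A *ᵥ xt + B *ᵥ yk - b))
    (hlh : lh = lk - (μ * β) • (A *ᵥ xt + B *ᵥ yk - b))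
    (hytY : yt ∈ Y)
    (hyt : ∀ y ∈ Y,
      θ₂ yt - lh ⬝ᵥ (A *ᵥ xt + B *ᵥ yt - b)
        + β / 2 * ((A *ᵥ xt + B *ᵥ yt - b) ⬝ᵥ (A *ᵥ xt + B *ᵥ yt - b))
      ≤ θ₂ y - lh ⬝ᵥ (A *ᵥ xt + B *ᵥ y - b)
        + β / 2 * ((A *ᵥ xt + B *ᵥ y - b) ⬝ᵥ (A *ᵥ xt + B *ᵥ y - b))) :
    ∀ x ∈ X, ∀ y ∈ Y, ∀ lam : Fin m → ℝ,
      (θ₁ x + θ₂ y) - (θ₁ xt + θ₂ yt)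
        + (x - xt) ⬝ᵥ (-(Aᵀ *ᵥ lt)) + (y - yt) ⬝ᵥ (-(Bᵀ *ᵥ lt))
        + (lam - lt) ⬝ᵥ (A *ᵥ xt + B *ᵥ yt - b)
      ≥ (y - yt) ⬝ᵥ (β • (Bᵀ *ᵥ (B *ᵥ (yk - yt))) - μ • (Bᵀ *ᵥ (lk - lt)))
        + (lam - lt) ⬝ᵥ (-(B *ᵥ (yk - yt)) + (1 / β) • (lk - lt)) := by
  have hx1 := vi_helper hθ₁ hX A (B *ᵥ yk - b) lk β hβ hxtX (by
    intro z hz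
    have e : ∀ v : Fin n₁ → ℝ, A *ᵥ v + (B *ᵥ yk - b) = A *ᵥ v + B *ᵥ yk - b :=
      fun v => (add_sub_assoc _ _ _).symm
    simp only [e]
    exact hxt z hz)
  have hy1 := vi_helper hθ₂ hY B (A *ᵥ xt - b) lh β hβ hytY (by
    intro z hz
    have e : ∀ v : Fin n₂ → ℝ, B *ᵥ v + (A *ᵥ xt - b) = A *ᵥ xt + B *ᵥ v - b :=
      fun v => by abel
    simp only [e]
    exact hyt z hz)
  intro x hx y hy lam
  have h1 := hx1 x hx
  have h2 := hy1 y hy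
  have hv1 : β • (A *ᵥ xt + (B *ᵥ yk - b)) - lk = -lt := by
    rw [hlt]; module
  rw [hv1, neg_dotProduct] at h1
  have hv2 : β • (B *ᵥ yt + (A *ᵥ xt - b)) - lh
      = -lt - β • (B *ᵥ (yk - yt)) + μ • (lk - lt) := by
    rw [hlh, hlt, Matrix.mulVec_sub]; module
  rw [hv2] at h2
  have h2e : (-lt - β • (B *ᵥ (yk - yt)) + μ • (lk - lt)) ⬝ᵥ (B *ᵥ (y - yt))
      = -(lt ⬝ᵥ (B *ᵥ (y - yt))) - β * ((B *ᵥ (yk - yt)) ⬝ᵥ (B *ᵥ (y - yt)))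
        + μ * ((lk - lt) ⬝ᵥ (B *ᵥ (y - yt))) := by
    simp only [add_dotProduct, sub_dotProduct, neg_dotProduct,
      smul_dotProduct, smul_eq_mul]
  rw [h2e] at h2
  have G1 : (x - xt) ⬝ᵥ (-(Aᵀ *ᵥ lt)) = -(lt ⬝ᵥ (A *ᵥ (x - xt))) := by
    rw [dotProduct_neg, Matrix.dotProduct_mulVec, Matrix.vecMul_transpose,
      dotProduct_comm]
  have G2 : (y - yt) ⬝ᵥ (-(Bᵀ *ᵥ lt)) = -(lt ⬝ᵥ (B *ᵥ (y - yt))) := by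
    rw [dotProduct_neg, Matrix.dotProduct_mulVec, Matrix.vecMul_transpose,
      dotProduct_comm]
  have G3 : (y - yt) ⬝ᵥ (β • (Bᵀ *ᵥ (B *ᵥ (yk - yt))) - μ • (Bᵀ *ᵥ (lk - lt)))
      = β * ((B *ᵥ (yk - yt)) ⬝ᵥ (B *ᵥ (y - yt))) - μ * ((lk - lt) ⬝ᵥ (B *ᵥ (y - yt))) := by
    have G3a : (y - yt) ⬝ᵥ (Bᵀ *ᵥ (B *ᵥ (yk - yt))) = (B *ᵥ (yk - yt)) ⬝ᵥ (B *ᵥ (y - yt)) := by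
      rw [Matrix.dotProduct_mulVec, Matrix.vecMul_transpose, dotProduct_comm]
    have G3b : (y - yt) ⬝ᵥ (Bᵀ *ᵥ (lk - lt)) = (lk - lt) ⬝ᵥ (B *ᵥ (y - yt)) := by
      rw [Matrix.dotProduct_mulVec, Matrix.vecMul_transpose, dotProduct_comm]
    rw [dotProduct_sub, dotProduct_smul, dotProduct_smul,
      G3a, G3b, smul_eq_mul, smul_eq_mul]
  have G4 : A *ᵥ xt + B *ᵥ yt - b = -(B *ᵥ (yk - yt)) + (1 / β) • (lk - lt) := by
    rw [hlt, Matrix.mulVec_sub, sub_sub_cancel, smul_smul,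
      one_div_mul_cancel hβ.ne', one_smul]
    abel
  rw [G1, G2, G3, G4]
  linarith [h1, h2]
end

section
/- Let B be a real m-by-n₂ matrix with full column rank, β > 0 and μ ∈ (0,1). Let Q = [[βB^TB, -μB^T], [-B, (1/β)I_m]] and M = [[I, 0], [-μβB, 2μI_m]] as block matrices. Then M is invertible with M^{-1} = [[I, 0], [(1/2)βB, (1/(2μ))I_m]], and H := QM^{-1} = (1/2)[[(2-μ)βB^TB, -B^T], [-B, (1/(μβ))I_m]] is a symmetric positive definite matrix. -/
/-!
`M` is block lower triangular with invertible diagonal blocks, so its inverse is again block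
lower triangular. Writing `H = ½ [[a BᵀB, -Bᵀ], [-B, c I]]` with `a = (2 - μ)β` and `c = 1/(μβ)`,
block `LDLᵀ` elimination of the `(2,1)` block gives the congruence
`2H = Lᵀ diag((a - 1/c) BᵀB, c I) L` with `L = [[I, 0], [-(1/c) B, I]]` invertible.
The Schur complement `(a - 1/c) BᵀB = 2(1 - μ)β BᵀB` is positive definite because `μ < 1` and
`B` has full column rank, so `H` is positive definite.
-/

open Matrix

namespace Matrix

variable {m n R : Type*} [Fintype m] [Fintype n]

theorem PosDef.fromBlocks_zero [Ring R] [PartialOrder R] [StarRing R] [IsOrderedAddMonoid R]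
    {A : Matrix m m R} {D : Matrix n n R} (hA : A.PosDef) (hD : D.PosDef) :
    (fromBlocks A 0 0 D).PosDef := by
  refine .of_dotProduct_mulVec_pos (hA.isHermitian.fromBlocks (by simp) hD.isHermitian)
    fun x hx => ?_
  rw [← Sum.elim_comp_inl_inr x] at hx ⊢
  simp only [fromBlocks_mulVec, zero_mulVec, add_zero, zero_add, Function.star_sumElim,
    sumElim_dotProduct_sumElim]
  by_cases hu : x ∘ Sum.inl = 0
  · have hv : x ∘ Sum.inr ≠ 0 := fun hv => hx (by rw [hu, hv, Sum.elim_zero_zero])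
    exact add_pos_of_nonneg_of_pos (hA.posSemidef.dotProduct_mulVec_nonneg _)
      (hD.dotProduct_mulVec_pos hv)
  · exact add_pos_of_pos_of_nonneg (hA.dotProduct_mulVec_pos hu)
      (hD.posSemidef.dotProduct_mulVec_nonneg _)

section Field

variable [DecidableEq m] [DecidableEq n] [Field R] (C : Matrix n m R) {c : R}

theorem fromBlocks_one_zero_smul_one_mul_inv (hc : c ≠ 0) :
    fromBlocks (1 : Matrix m m R) 0 C (c • (1 : Matrix n n R)) *
      fromBlocks 1 0 (-c⁻¹ • C) (c⁻¹ • 1) = 1 := by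
  rw [fromBlocks_multiply, ← fromBlocks_one]
  simp [hc]

theorem inv_fromBlocks_one_zero_smul_one (hc : c ≠ 0) :
    (fromBlocks (1 : Matrix m m R) 0 C (c • (1 : Matrix n n R)))⁻¹ =
      fromBlocks 1 0 (-c⁻¹ • C) (c⁻¹ • 1) :=
  inv_eq_right_inv (fromBlocks_one_zero_smul_one_mul_inv C hc)

theorem isUnit_fromBlocks_one_zero_smul_one (hc : c ≠ 0) :
    IsUnit (fromBlocks (1 : Matrix m m R) 0 C (c • (1 : Matrix n n R))) :=
  .of_mul_eq_one _ (fromBlocks_one_zero_smul_one_mul_inv C hc)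

end Field

theorem fromBlocks_gram_eq_transpose_mul_mul [DecidableEq m] [DecidableEq n] [Field R]
    (B : Matrix m n R) (a : R) {c : R} (hc : c ≠ 0) :
    fromBlocks (a • (Bᵀ * B)) (-Bᵀ) (-B) (c • 1) =
      (fromBlocks 1 0 (-c⁻¹ • B) 1)ᵀ * fromBlocks ((a - c⁻¹) • (Bᵀ * B)) 0 0 (c • 1) *
        fromBlocks 1 0 (-c⁻¹ • B) 1 := by
  simp [fromBlocks_transpose, fromBlocks_multiply, hc, sub_smul]

theorem PosDef.fromBlocks_gram [DecidableEq m] [DecidableEq n] [Field R] [LinearOrder R]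
    [IsOrderedRing R] [StarRing R] [StarOrderedRing R] [TrivialStar R]
    {B : Matrix m n R} (hB : Function.Injective B.mulVec) {a c : R} (hc : 0 < c)
    (hac : c⁻¹ < a) :
    (fromBlocks (a • (Bᵀ * B)) (-Bᵀ) (-B) (c • 1)).PosDef := by
  rw [fromBlocks_gram_eq_transpose_mul_mul B a hc.ne', ← conjTranspose_eq_transpose_of_trivial]
  have hS : ((a - c⁻¹) • (Bᵀ * B)).PosDef := by
    rw [← conjTranspose_eq_transpose_of_trivial]
    exact (PosDef.conjTranspose_mul_self B hB).smul (sub_pos.mpr hac)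
  exact (hS.fromBlocks_zero (PosDef.one.smul hc)).conjTranspose_mul_mul_same
    (mulVec_injective_of_isUnit (isUnit_fromBlocks_zero₁₂.mpr ⟨isUnit_one, isUnit_one⟩))

end Matrix

/-- For the SC-PRSM matrices `Q = [[βBᵀB, -μBᵀ], [-B, (1/β)I]]` and
`M = [[I, 0], [-μβB, 2μI]]` with `B` of full column rank, `β > 0`, `μ ∈ (0,1)`:
`M` is invertible with `M⁻¹ = [[I, 0], [(1/2)βB, (1/(2μ))I]]`, and
`H := QM⁻¹ = (1/2)[[(2-μ)βBᵀB, -Bᵀ], [-B, (1/(μβ))I]]` is symmetric positive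
definite. -/
theorem stmt9 (n₂ m : ℕ) (B : Matrix (Fin m) (Fin n₂) ℝ)
    (hB : ∀ x : Fin n₂ → ℝ, B *ᵥ x = 0 → x = 0)
    (β μ : ℝ) (hβ : 0 < β) (hμ : μ ∈ Set.Ioo (0 : ℝ) 1)
    (Q M : Matrix (Fin n₂ ⊕ Fin m) (Fin n₂ ⊕ Fin m) ℝ)
    (hQ : Q = Matrix.fromBlocks (β • (Bᵀ * B)) (-(μ • Bᵀ)) (-B) ((1 / β) • 1))
    (hM : M = Matrix.fromBlocks 1 0 (-((μ * β) • B)) ((2 * μ) • 1)) :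
    (IsUnit M ∧ M⁻¹ = Matrix.fromBlocks 1 0 (((1 / 2) * β) • B) ((1 / (2 * μ)) • 1))
    ∧ Q * M⁻¹
        = (1 / 2 : ℝ) •
            Matrix.fromBlocks (((2 - μ) * β) • (Bᵀ * B)) (-Bᵀ) (-B) ((1 / (μ * β)) • 1)
    ∧ (Q * M⁻¹)ᵀ = Q * M⁻¹
    ∧ ∀ x : Fin n₂ ⊕ Fin m → ℝ, x ≠ 0 → 0 < x ⬝ᵥ ((Q * M⁻¹) *ᵥ x) := by
  obtain ⟨hμ0, hμ1⟩ := hμ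
  have hUnit : IsUnit M := by
    rw [hM]
    exact isUnit_fromBlocks_one_zero_smul_one _ (by positivity)
  have hMinv : M⁻¹ = fromBlocks 1 0 (((1 / 2) * β) • B) ((1 / (2 * μ)) • 1) := by
    rw [hM, inv_fromBlocks_one_zero_smul_one _ (by positivity)]
    congr 1
    · rw [neg_smul_neg, smul_smul]
      congr 1
      field_simp
    · rw [one_div]
  have hH : Q * M⁻¹ = (1 / 2 : ℝ) •
      fromBlocks (((2 - μ) * β) • (Bᵀ * B)) (-Bᵀ) (-B) ((1 / (μ * β)) • 1) := by
    rw [hMinv, hQ, fromBlocks_multiply, fromBlocks_smul]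
    congr 1 <;>
      simp only [Matrix.smul_mul, Matrix.mul_smul, Matrix.neg_mul, Matrix.mul_one, Matrix.one_mul,
        Matrix.mul_zero, zero_add] <;>
      match_scalars <;> field_simp <;> ring
  have hPD : (Q * M⁻¹).PosDef := by
    rw [hH]
    refine .smul (.fromBlocks_gram (LinearMap.ker_eq_bot.mp (ker_mulVecLin_eq_bot_iff.mpr hB))
      (by positivity) ?_) (by norm_num)
    rw [one_div, inv_inv]
    nlinarith [mul_pos (sub_pos.mpr hμ1) hβ]
  refine ⟨⟨hUnit, hMinv⟩, hH, ?_, fun x hx => by simpa using hPD.dotProduct_mulVec_pos hx⟩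
  rw [← conjTranspose_eq_transpose_of_trivial]
  exact hPD.isHermitian
end

section
/- Let B be a real m-by-n₂ matrix with full column rank, β > 0 and μ ∈ (0,1). Let Q = [[βB^TB, -μB^T], [-B, (1/β)I_m]] and M = [[I, 0], [-μβB, 2μI_m]] as block matrices. Then M^T Q = [[(1+μ)βB^TB, -2μB^T], [-2μB, (2μ/β)I_m]], and G := Q^T + Q - M^T Q = (1-μ)[[βB^TB, -B^T], [-B, (2/β)I_m]] is symmetric positive definite. -/
open Matrix

/-- For the SC-PRSM matrices `Q = [[βBᵀB, -μBᵀ], [-B, (1/β)I]]` and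
`M = [[I, 0], [-μβB, 2μI]]` with `B` of full column rank, `β > 0`, `μ ∈ (0,1)`:
`MᵀQ = [[(1+μ)βBᵀB, -2μBᵀ], [-2μB, (2μ/β)I]]` and
`G := Qᵀ + Q - MᵀQ = (1-μ)[[βBᵀB, -Bᵀ], [-B, (2/β)I]]` is symmetric positive
definite. -/
theorem stmt10 (n₂ m : ℕ) (B : Matrix (Fin m) (Fin n₂) ℝ)
    (hB : ∀ x : Fin n₂ → ℝ, B *ᵥ x = 0 → x = 0)
    (β μ : ℝ) (hβ : 0 < β) (hμ : μ ∈ Set.Ioo (0 : ℝ) 1)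
    (Q M : Matrix (Fin n₂ ⊕ Fin m) (Fin n₂ ⊕ Fin m) ℝ)
    (hQ : Q = Matrix.fromBlocks (β • (Bᵀ * B)) (-(μ • Bᵀ)) (-B) ((1 / β) • 1))
    (hM : M = Matrix.fromBlocks 1 0 (-((μ * β) • B)) ((2 * μ) • 1)) :
    Mᵀ * Q
      = Matrix.fromBlocks (((1 + μ) * β) • (Bᵀ * B)) (-((2 * μ) • Bᵀ))
          (-((2 * μ) • B)) ((2 * μ / β) • 1)
    ∧ Qᵀ + Q - Mᵀ * Q
        = (1 - μ) • Matrix.fromBlocks (β • (Bᵀ * B)) (-Bᵀ) (-B) ((2 / β) • 1)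
    ∧ (Qᵀ + Q - Mᵀ * Q)ᵀ = Qᵀ + Q - Mᵀ * Q
    ∧ ∀ x : Fin n₂ ⊕ Fin m → ℝ, x ≠ 0 → 0 < x ⬝ᵥ ((Qᵀ + Q - Mᵀ * Q) *ᵥ x) := by
  obtain ⟨hμ0, hμ1⟩ := hμ
  have hβ' : β ≠ 0 := hβ.ne'
  have h1 : Mᵀ * Q
      = Matrix.fromBlocks (((1 + μ) * β) • (Bᵀ * B)) (-((2 * μ) • Bᵀ))
          (-((2 * μ) • B)) ((2 * μ / β) • 1) := by
    rw [hQ, hM]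
    have e1 : β⁻¹ * (μ * β) = μ := by field_simp
    have e2 : β⁻¹ * (2 * μ) = 2 * μ / β := by ring
    rw [Matrix.fromBlocks_transpose, Matrix.fromBlocks_multiply]
    simp [Matrix.smul_mul, Matrix.mul_smul, smul_smul, e1, e2]
    and_intros <;> module
  have h2 : Qᵀ + Q - Mᵀ * Q
      = (1 - μ) • Matrix.fromBlocks (β • (Bᵀ * B)) (-Bᵀ) (-B) ((2 / β) • 1) := by
    rw [h1, hQ]
    rw [sub_eq_add_neg, Matrix.fromBlocks_transpose, Matrix.fromBlocks_neg,
      Matrix.fromBlocks_add, Matrix.fromBlocks_add, Matrix.fromBlocks_smul]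
    simp only [Matrix.transpose_smul, Matrix.transpose_mul, Matrix.transpose_transpose,
      Matrix.transpose_neg, Matrix.transpose_one, smul_smul]
    ext i j
    cases i <;> cases j <;> simp [Matrix.mul_apply, Matrix.one_apply, mul_ite]
    all_goals try ring
    all_goals split_ifs <;> ring
  have h3 : (Qᵀ + Q - Mᵀ * Q)ᵀ = Qᵀ + Q - Mᵀ * Q := by
    rw [h2]
    rw [Matrix.transpose_smul, Matrix.fromBlocks_transpose]
    simp only [Matrix.transpose_smul, Matrix.transpose_mul, Matrix.transpose_transpose,
      Matrix.transpose_neg, Matrix.transpose_one]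
  refine ⟨h1, h2, h3, ?_⟩
  have hnn : ∀ {k : ℕ} (y : Fin k → ℝ), 0 ≤ y ⬝ᵥ y := fun y =>
    Finset.sum_nonneg fun i _ => mul_self_nonneg _
  have hpos : ∀ {k : ℕ} (y : Fin k → ℝ), y ≠ 0 → 0 < y ⬝ᵥ y := fun y hy =>
    lt_of_le_of_ne (hnn y) (fun h => hy (dotProduct_self_eq_zero.mp h.symm))
  intro x hx
  rw [h2]
  set u : Fin n₂ → ℝ := x ∘ Sum.inl with hu
  set v : Fin m → ℝ := x ∘ Sum.inr with hv
  have hxe : x = Sum.elim u v := by funext i; cases i <;> rfl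
  set w : Fin m → ℝ := B *ᵥ u with hw
  have hub : u ⬝ᵥ (Bᵀ *ᵥ v) = w ⬝ᵥ v := by
    rw [Matrix.dotProduct_mulVec, Matrix.vecMul_transpose]
  have hBtB : u ⬝ᵥ ((Bᵀ * B) *ᵥ u) = w ⬝ᵥ w := by
    rw [← Matrix.mulVec_mulVec, Matrix.dotProduct_mulVec, Matrix.vecMul_transpose]
  have key : x ⬝ᵥ ((Matrix.fromBlocks (β • (Bᵀ * B)) (-Bᵀ) (-B) ((2 / β) • (1:Matrix (Fin m) (Fin m) ℝ))) *ᵥ x)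
      = β * (w ⬝ᵥ w) - 2 * (v ⬝ᵥ w) + (2 / β) * (v ⬝ᵥ v) := by
    rw [hxe, Matrix.fromBlocks_mulVec, sumElim_dotProduct_sumElim]
    simp only [Matrix.smul_mulVec, Matrix.neg_mulVec, Matrix.one_mulVec,
      dotProduct_add, dotProduct_neg, dotProduct_smul, smul_eq_mul,
      Sum.elim_comp_inl, Sum.elim_comp_inr, hBtB, hub, ← hw]
    rw [dotProduct_comm w v]; ring
  have expand : (β • w - v) ⬝ᵥ (β • w - v)
      = β^2 * (w ⬝ᵥ w) - 2*β*(v ⬝ᵥ w) + v ⬝ᵥ v := by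
    simp only [dotProduct_sub, sub_dotProduct, smul_dotProduct, dotProduct_smul, smul_eq_mul]
    rw [dotProduct_comm w v]; ring
  have hE := hnn (β • w - v)
  have hquad : 0 < β * (w ⬝ᵥ w) - 2 * (v ⬝ᵥ w) + (2 / β) * (v ⬝ᵥ v) := by
    by_cases hv0 : v = 0
    · have hu0 : u ≠ 0 := by
        intro h; apply hx; rw [hxe, h, hv0]; funext i; cases i <;> rfl
      have hw0 : w ≠ 0 := fun h => hu0 (hB u h)
      have := hpos w hw0
      simp [hv0]
      positivity
    · have hvv := hpos v hv0
      rw [expand] at hE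
      have h1' : 0 ≤ β * (w ⬝ᵥ w) - 2 * (v ⬝ᵥ w) + (1/β) * (v ⬝ᵥ v) := by
        have hm := mul_nonneg (le_of_lt (one_div_pos.mpr hβ)) hE
        calc (0:ℝ) ≤ (1/β) * (β^2 * (w ⬝ᵥ w) - 2*β*(v ⬝ᵥ w) + v ⬝ᵥ v) := hm
          _ = β * (w ⬝ᵥ w) - 2 * (v ⬝ᵥ w) + (1/β) * (v ⬝ᵥ v) := by
              field_simp
      have h2' : 0 < (1/β) * (v ⬝ᵥ v) := mul_pos (one_div_pos.mpr hβ) hvv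
      have h3' : (2/β) * (v ⬝ᵥ v) = (1/β) * (v ⬝ᵥ v) + (1/β) * (v ⬝ᵥ v) := by ring
      linarith
  rw [Matrix.smul_mulVec, dotProduct_smul, smul_eq_mul, key]
  exact mul_pos (by linarith) hquad
end

section
/- Let B be a real m-by-n₂ matrix and C a real m-by-n₃ matrix, both with full column rank, and let β > 0. Let Q be the block matrix [[βB^TB, 0, 0], [βC^TB, βC^TC, 0], [-B, -C, (1/β)I_m]]. Then Q^T + Q = [[2βB^TB, βB^TC, -B^T], [βC^TB, 2βC^TC, -C^T], [-B, -C, (2/β)I_m]] is symmetric positive definite. -/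
/-! Write `x = (u, v, w)` and put `a = B u`, `b = C v`, `c = w`. Since `xᵀ(Qᵀ + Q)x = 2 xᵀQx`
and `Q` is block lower triangular, completing the square gives
`2 xᵀQx = β‖a‖² + β‖b‖² + β⁻¹‖c‖² + β⁻¹‖β(a + b) - c‖²`,
which is positive unless `a = b = c = 0`; by full column rank of `B` and `C` this forces `x = 0`. -/

open Matrix

section DotProduct

variable {ι : Type*} [Fintype ι]

lemma dotProduct_self_nonneg_real (v : ι → ℝ) : 0 ≤ v ⬝ᵥ v := by
  simpa using dotProduct_star_self_nonneg v

lemma dotProduct_self_pos_real {v : ι → ℝ} (hv : v ≠ 0) : 0 < v ⬝ᵥ v := by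
  simpa using dotProduct_star_self_pos_iff.mpr hv

lemma dotProduct_transpose_add_mulVec (M : Matrix ι ι ℝ) (x : ι → ℝ) :
    x ⬝ᵥ ((Mᵀ + M) *ᵥ x) = 2 * (x ⬝ᵥ (M *ᵥ x)) := by
  rw [add_mulVec, dotProduct_add, dotProduct_mulVec x Mᵀ, vecMul_transpose, dotProduct_comm]
  ring

noncomputable def threeBlockForm (β : ℝ) (a b c : ι → ℝ) : ℝ :=
  β * (a ⬝ᵥ a) + β * (b ⬝ᵥ a) + β * (b ⬝ᵥ b) - c ⬝ᵥ a - c ⬝ᵥ b + 1 / β * (c ⬝ᵥ c)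

lemma two_mul_threeBlockForm {β : ℝ} (hβ : β ≠ 0) (a b c : ι → ℝ) :
    2 * threeBlockForm β a b c
      = β * (a ⬝ᵥ a) + β * (b ⬝ᵥ b) + 1 / β * (c ⬝ᵥ c)
        + 1 / β * ((β • (a + b) - c) ⬝ᵥ (β • (a + b) - c)) := by
  simp only [threeBlockForm, dotProduct_sub, sub_dotProduct, dotProduct_add, add_dotProduct,
    dotProduct_smul, smul_dotProduct, smul_eq_mul, dotProduct_comm a b, dotProduct_comm a c,
    dotProduct_comm b c]
  field_simp
  ring

lemma threeBlockForm_pos {β : ℝ} (hβ : 0 < β) {a b c : ι → ℝ} (h : a ≠ 0 ∨ b ≠ 0 ∨ c ≠ 0) :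
    0 < threeBlockForm β a b c := by
  have hsq : 0 < β * (a ⬝ᵥ a) + β * (b ⬝ᵥ b) + 1 / β * (c ⬝ᵥ c) := by
    have ha := dotProduct_self_nonneg_real a
    have hb := dotProduct_self_nonneg_real b
    have hc := dotProduct_self_nonneg_real c
    rcases h with h | h | h <;> have := dotProduct_self_pos_real h <;> positivity
  have hrest : 0 ≤ 1 / β * ((β • (a + b) - c) ⬝ᵥ (β • (a + b) - c)) :=
    mul_nonneg (by positivity) (dotProduct_self_nonneg_real _)
  linarith [two_mul_threeBlockForm hβ.ne' a b c]

end DotProduct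

section PredictionMatrix

variable {m n₂ n₃ : Type*} [Fintype m] [DecidableEq m]

noncomputable def admmPredictionMatrix (B : Matrix m n₂ ℝ) (C : Matrix m n₃ ℝ) (β : ℝ) :
    Matrix (n₂ ⊕ (n₃ ⊕ m)) (n₂ ⊕ (n₃ ⊕ m)) ℝ :=
  fromBlocks (β • (Bᵀ * B)) 0 (fromRows (β • (Cᵀ * B)) (-B))
    (fromBlocks (β • (Cᵀ * C)) 0 (-C) ((1 / β) • 1))

lemma transpose_add_admmPredictionMatrix (B : Matrix m n₂ ℝ) (C : Matrix m n₃ ℝ) (β : ℝ) :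
    (admmPredictionMatrix B C β)ᵀ + admmPredictionMatrix B C β
      = fromBlocks ((2 * β) • (Bᵀ * B)) (fromCols (β • (Bᵀ * C)) (-Bᵀ))
          (fromRows (β • (Cᵀ * B)) (-B))
          (fromBlocks ((2 * β) • (Cᵀ * C)) (-Cᵀ) (-C) ((2 / β) • 1)) := by
  simp only [admmPredictionMatrix, fromBlocks_transpose, transpose_fromRows, fromBlocks_add,
    transpose_smul, transpose_mul, transpose_transpose, transpose_neg, transpose_zero,
    transpose_one, zero_add, add_zero, ← add_smul]
  rw [two_mul, ← add_div, one_add_one_eq_two]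

lemma dotProduct_admmPredictionMatrix_mulVec [Fintype n₂] [Fintype n₃]
    (B : Matrix m n₂ ℝ) (C : Matrix m n₃ ℝ) (β : ℝ) (u : n₂ → ℝ) (v : n₃ → ℝ) (w : m → ℝ) :
    Sum.elim u (Sum.elim v w) ⬝ᵥ (admmPredictionMatrix B C β *ᵥ Sum.elim u (Sum.elim v w))
      = threeBlockForm β (B *ᵥ u) (C *ᵥ v) w := by
  simp only [admmPredictionMatrix, threeBlockForm, fromBlocks_mulVec, fromRows_mulVec,
    Sum.elim_comp_inl, Sum.elim_comp_inr, zero_mulVec, smul_mulVec, ← mulVec_mulVec, neg_mulVec,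
    one_mulVec, sumElim_dotProduct_sumElim, dotProduct_add, dotProduct_smul, dotProduct_neg,
    add_zero, smul_eq_mul, dotProduct_mulVec _ Bᵀ, dotProduct_mulVec _ Cᵀ, vecMul_transpose]
  ring

end PredictionMatrix

/-- For the three-block prediction matrix
`Q = [[βBᵀB, 0, 0], [βCᵀB, βCᵀC, 0], [-B, -C, (1/β)I]]` with `B`, `C` of full
column rank and `β > 0`, the matrix
`Qᵀ + Q = [[2βBᵀB, βBᵀC, -Bᵀ], [βCᵀB, 2βCᵀC, -Cᵀ], [-B, -C, (2/β)I]]`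
is symmetric positive definite. -/
theorem stmt11 (m n₂ n₃ : ℕ)
    (B : Matrix (Fin m) (Fin n₂) ℝ) (C : Matrix (Fin m) (Fin n₃) ℝ)
    (hB : ∀ x : Fin n₂ → ℝ, B *ᵥ x = 0 → x = 0)
    (hC : ∀ x : Fin n₃ → ℝ, C *ᵥ x = 0 → x = 0)
    (β : ℝ) (hβ : 0 < β)
    (Q : Matrix (Fin n₂ ⊕ (Fin n₃ ⊕ Fin m)) (Fin n₂ ⊕ (Fin n₃ ⊕ Fin m)) ℝ)
    (hQ : Q = Matrix.fromBlocks (β • (Bᵀ * B)) 0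
        (Matrix.fromRows (β • (Cᵀ * B)) (-B))
        (Matrix.fromBlocks (β • (Cᵀ * C)) 0 (-C) ((1 / β) • 1))) :
    Qᵀ + Q
      = Matrix.fromBlocks ((2 * β) • (Bᵀ * B))
          (Matrix.fromCols (β • (Bᵀ * C)) (-Bᵀ))
          (Matrix.fromRows (β • (Cᵀ * B)) (-B))
          (Matrix.fromBlocks ((2 * β) • (Cᵀ * C)) (-Cᵀ) (-C) ((2 / β) • 1))
    ∧ (Qᵀ + Q)ᵀ = Qᵀ + Q
    ∧ ∀ x : Fin n₂ ⊕ (Fin n₃ ⊕ Fin m) → ℝ, x ≠ 0 → 0 < x ⬝ᵥ ((Qᵀ + Q) *ᵥ x) := by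
  obtain rfl : Q = admmPredictionMatrix B C β := hQ
  refine ⟨transpose_add_admmPredictionMatrix B C β,
    by rw [transpose_add, transpose_transpose, add_comm], fun x hx => ?_⟩
  obtain ⟨u, v, w, rfl⟩ : ∃ u v w, x = Sum.elim u (Sum.elim v w) :=
    ⟨_, _, _, by rw [Sum.elim_comp_inl_inr, Sum.elim_comp_inl_inr]⟩
  have hne : B *ᵥ u ≠ 0 ∨ C *ᵥ v ≠ 0 ∨ w ≠ 0 := by
    contrapose! hx
    obtain ⟨hu, hv, hw⟩ := hx
    rw [hB u hu, hC v hv, hw, Sum.elim_zero_zero, Sum.elim_zero_zero]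
  rw [dotProduct_transpose_add_mulVec, dotProduct_admmPredictionMatrix_mulVec]
  exact mul_pos two_pos (threeBlockForm_pos hβ hne)
end

section
/- Let B be a real m-by-n₂ matrix and C a real m-by-n₃ matrix, both with full column rank, let β > 0 and ν ∈ (0,1). Let Q be the block matrix [[βB^TB, 0, 0], [βC^TB, βC^TC, 0], [-B, -C, (1/β)I_m]] and let D be the block diagonal matrix [[νβB^TB, 0, 0], [0, νβC^TC, 0], [0, 0, (1/β)I_m]]. Then D is symmetric positive definite and Q^T + Q - D is symmetric positive definite. -/
open Matrix

private lemma dps_nonneg {ι : Type*} [Fintype ι] (v : ι → ℝ) : 0 ≤ v ⬝ᵥ v :=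
  Finset.sum_nonneg fun i _ => mul_self_nonneg _

private lemma dps_pos {ι : Type*} [Fintype ι] {v : ι → ℝ} (h : v ≠ 0) : 0 < v ⬝ᵥ v :=
  (dps_nonneg v).lt_of_ne fun e => h (dotProduct_self_eq_zero.mp e.symm)

/-- For the three-block prediction matrix
`Q = [[βBᵀB, 0, 0], [βCᵀB, βCᵀC, 0], [-B, -C, (1/β)I]]` and the block-diagonal
matrix `D = diag(νβBᵀB, νβCᵀC, (1/β)I)` with `B`, `C` of full column rank,
`β > 0` and `ν ∈ (0,1)`, both `D` and `Qᵀ + Q - D` are symmetric positive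
definite. -/
theorem stmt12 (m n₂ n₃ : ℕ)
    (B : Matrix (Fin m) (Fin n₂) ℝ) (C : Matrix (Fin m) (Fin n₃) ℝ)
    (hB : ∀ x : Fin n₂ → ℝ, B *ᵥ x = 0 → x = 0)
    (hC : ∀ x : Fin n₃ → ℝ, C *ᵥ x = 0 → x = 0)
    (β ν : ℝ) (hβ : 0 < β) (hν : ν ∈ Set.Ioo (0 : ℝ) 1)
    (Q D : Matrix (Fin n₂ ⊕ (Fin n₃ ⊕ Fin m)) (Fin n₂ ⊕ (Fin n₃ ⊕ Fin m)) ℝ)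
    (hQ : Q = Matrix.fromBlocks (β • (Bᵀ * B)) 0
        (Matrix.fromRows (β • (Cᵀ * B)) (-B))
        (Matrix.fromBlocks (β • (Cᵀ * C)) 0 (-C) ((1 / β) • 1)))
    (hD : D = Matrix.fromBlocks ((ν * β) • (Bᵀ * B)) 0 0
        (Matrix.fromBlocks ((ν * β) • (Cᵀ * C)) 0 0 ((1 / β) • 1))) :
    (Dᵀ = D ∧ ∀ x : Fin n₂ ⊕ (Fin n₃ ⊕ Fin m) → ℝ, x ≠ 0 → 0 < x ⬝ᵥ (D *ᵥ x))
    ∧ ((Qᵀ + Q - D)ᵀ = Qᵀ + Q - D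
        ∧ ∀ x : Fin n₂ ⊕ (Fin n₃ ⊕ Fin m) → ℝ, x ≠ 0 →
            0 < x ⬝ᵥ ((Qᵀ + Q - D) *ᵥ x)) := by
  obtain ⟨hν0, hν1⟩ := hν
  have hβ' : β ≠ 0 := ne_of_gt hβ
  have key : ∀ x : Fin n₂ ⊕ (Fin n₃ ⊕ Fin m) → ℝ, x ≠ 0 →
      ∃ u v w, x = Sum.elim u (Sum.elim v w) ∧ (u ≠ 0 ∨ v ≠ 0 ∨ w ≠ 0) := by
    intro x hx
    refine ⟨x ∘ Sum.inl, x ∘ Sum.inr ∘ Sum.inl, x ∘ Sum.inr ∘ Sum.inr, ?_, ?_⟩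
    · funext i; rcases i with i | j | k <;> rfl
    · by_contra h
      push_neg at h
      obtain ⟨h1, h2, h3⟩ := h
      apply hx
      funext i; rcases i with i | j | k
      · exact congrFun h1 i
      · exact congrFun h2 j
      · exact congrFun h3 k
  have hDsym : Dᵀ = D := by
    subst hD
    simp [Matrix.fromBlocks_transpose, Matrix.transpose_smul, Matrix.transpose_mul,
      Matrix.mul_assoc]
  have hDform : ∀ (u : Fin n₂ → ℝ) (v : Fin n₃ → ℝ) (w : Fin m → ℝ),
      (Sum.elim u (Sum.elim v w)) ⬝ᵥ (D *ᵥ (Sum.elim u (Sum.elim v w)))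
      = ν * β * ((B *ᵥ u) ⬝ᵥ (B *ᵥ u)) + (ν * β * ((C *ᵥ v) ⬝ᵥ (C *ᵥ v))
          + (1/β) * (w ⬝ᵥ w)) := by
    intro u v w
    subst hD
    simp [fromBlocks_mulVec, sumElim_dotProduct_sumElim, smul_mulVec,
      mulVec_mulVec, ← vecMul_vecMul, dotProduct_smul, dotProduct_mulVec,
      vecMul_transpose, smul_eq_mul, mul_assoc]
  have hQform : ∀ (u : Fin n₂ → ℝ) (v : Fin n₃ → ℝ) (w : Fin m → ℝ),
      (Sum.elim u (Sum.elim v w)) ⬝ᵥ (Q *ᵥ (Sum.elim u (Sum.elim v w)))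
      = β * ((B *ᵥ u) ⬝ᵥ (B *ᵥ u)) + (β * ((C *ᵥ v) ⬝ᵥ (B *ᵥ u))
          + β * ((C *ᵥ v) ⬝ᵥ (C *ᵥ v))
          + (-(w ⬝ᵥ (B *ᵥ u)) + (-(w ⬝ᵥ (C *ᵥ v)) + (1/β) * (w ⬝ᵥ w)))) := by
    intro u v w
    subst hQ
    simp [fromBlocks_mulVec, fromRows_mulVec, sumElim_dotProduct_sumElim,
      smul_mulVec, mulVec_mulVec, ← vecMul_vecMul, dotProduct_smul,
      dotProduct_add, dotProduct_mulVec, vecMul_transpose, vecMul_neg,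
      neg_dotProduct, smul_eq_mul, mul_assoc]
    ring
  refine ⟨⟨hDsym, ?_⟩, ?_, ?_⟩
  · intro x hx
    obtain ⟨u, v, w, rfl, hne⟩ := key x hx
    rw [hDform u v w]
    have h1 : 0 ≤ ν * β * ((B *ᵥ u) ⬝ᵥ (B *ᵥ u)) :=
      mul_nonneg (by positivity) (dps_nonneg _)
    have h2 : 0 ≤ ν * β * ((C *ᵥ v) ⬝ᵥ (C *ᵥ v)) :=
      mul_nonneg (by positivity) (dps_nonneg _)
    have h3 : 0 ≤ (1/β) * (w ⬝ᵥ w) := mul_nonneg (by positivity) (dps_nonneg _)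
    rcases hne with hu | hv | hw
    · have : 0 < ν * β * ((B *ᵥ u) ⬝ᵥ (B *ᵥ u)) :=
        mul_pos (by positivity) (dps_pos fun h => hu (hB u h))
      linarith
    · have : 0 < ν * β * ((C *ᵥ v) ⬝ᵥ (C *ᵥ v)) :=
        mul_pos (by positivity) (dps_pos fun h => hv (hC v h))
      linarith
    · have : 0 < (1/β) * (w ⬝ᵥ w) := mul_pos (by positivity) (dps_pos hw)
      linarith
  · rw [transpose_sub, transpose_add, transpose_transpose, hDsym]
    abel
  · intro x hx
    obtain ⟨u, v, w, rfl, hne⟩ := key x hx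
    set x := Sum.elim u (Sum.elim v w) with hxdef
    have hsplit : x ⬝ᵥ ((Qᵀ + Q - D) *ᵥ x)
        = x ⬝ᵥ (Q *ᵥ x) + x ⬝ᵥ (Q *ᵥ x) - x ⬝ᵥ (D *ᵥ x) := by
      rw [sub_mulVec, add_mulVec, dotProduct_sub, dotProduct_add]
      congr 2
      rw [dotProduct_mulVec, vecMul_transpose, dotProduct_comm]
    rw [hsplit, hQform u v w, hDform u v w]
    set a := B *ᵥ u with ha
    set b := C *ᵥ v with hb
    set d := β • (a + b) - w with hd
    have hba : b ⬝ᵥ a = a ⬝ᵥ b := dotProduct_comm _ _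
    have hwa : w ⬝ᵥ a = a ⬝ᵥ w := dotProduct_comm _ _
    have hwb : w ⬝ᵥ b = b ⬝ᵥ w := dotProduct_comm _ _
    have hdd : d ⬝ᵥ d = β * β * (a ⬝ᵥ a) + β * β * (b ⬝ᵥ b) + w ⬝ᵥ w
        + 2 * (β * β) * (a ⬝ᵥ b) - 2 * β * (a ⬝ᵥ w) - 2 * β * (b ⬝ᵥ w) := by
      simp only [hd, dotProduct_sub, sub_dotProduct, dotProduct_add, add_dotProduct,
        dotProduct_smul, smul_dotProduct, smul_eq_mul, hba, hwa, hwb]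
      ring
    have hident : β * (a ⬝ᵥ a) + (β * (b ⬝ᵥ a) + β * (b ⬝ᵥ b)
          + (-(w ⬝ᵥ a) + (-(w ⬝ᵥ b) + 1 / β * (w ⬝ᵥ w))))
        + (β * (a ⬝ᵥ a) + (β * (b ⬝ᵥ a) + β * (b ⬝ᵥ b)
          + (-(w ⬝ᵥ a) + (-(w ⬝ᵥ b) + 1 / β * (w ⬝ᵥ w)))))
        - (ν * β * (a ⬝ᵥ a) + (ν * β * (b ⬝ᵥ b) + 1 / β * (w ⬝ᵥ w)))
        = (1 - ν) * β * (a ⬝ᵥ a) + (1 - ν) * β * (b ⬝ᵥ b) + (1 / β) * (d ⬝ᵥ d) := by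
      rw [hdd, hba, hwa, hwb]
      field_simp
      ring
    rw [hident]
    have h1 : 0 ≤ (1 - ν) * β * (a ⬝ᵥ a) :=
      mul_nonneg (by nlinarith) (dps_nonneg _)
    have h2 : 0 ≤ (1 - ν) * β * (b ⬝ᵥ b) :=
      mul_nonneg (by nlinarith) (dps_nonneg _)
    have h3 : 0 ≤ (1 / β) * (d ⬝ᵥ d) := mul_nonneg (by positivity) (dps_nonneg _)
    by_cases hu : u = 0
    · by_cases hv : v = 0
      · have hw : w ≠ 0 := by
          rcases hne with h | h | h
          exacts [absurd hu h, absurd hv h, h]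
        have ha0 : a = 0 := by rw [ha, hu, mulVec_zero]
        have hb0 : b = 0 := by rw [hb, hv, mulVec_zero]
        have hd0 : d ≠ 0 := by
          rw [hd, ha0, hb0]
          simpa using hw
        have : 0 < (1 / β) * (d ⬝ᵥ d) := mul_pos (by positivity) (dps_pos hd0)
        linarith
      · have : 0 < (1 - ν) * β * (b ⬝ᵥ b) :=
          mul_pos (by nlinarith) (dps_pos fun h => hv (hC v h))
        linarith
    · have : 0 < (1 - ν) * β * (a ⬝ᵥ a) :=
        mul_pos (by nlinarith) (dps_pos fun h => hu (hB u h))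
      linarith
end

section
/- (Prediction representation of the direct extension of ADMM for three blocks.) Let θ₁, θ₂, θ₃ be convex real-valued functions on R^{n₁}, R^{n₂}, R^{n₃}, let X, Y, Z be convex subsets of R^{n₁}, R^{n₂}, R^{n₃}, let A, B, C be real m-by-n₁, m-by-n₂, m-by-n₃ matrices, b ∈ R^m, β > 0. Given (y^k, z^k, λ^k), suppose: x̃^k ∈ X minimizes x ↦ θ₁(x) - x^TA^Tλ^k + (β/2)‖Ax + By^k + Cz^k - b‖² over X; ỹ^k ∈ Y minimizes y ↦ θ₂(y) - y^TB^Tλ^k + (β/2)‖Ax̃^k + By + Cz^k - b‖² over Y; z̃^k ∈ Z minimizes z ↦ θ₃(z) - z^TC^Tλ^k + (β/2)‖Ax̃^k + Bỹ^k + Cz - b‖² over Z; and λ̃^k = λ^k - β(Ax̃^k + By^k + Cz^k - b). Then for all x ∈ X, y ∈ Y, z ∈ Z, λ ∈ R^m: [θ₁(x)+θ₂(y)+θ₃(z)] - [θ₁(x̃^k)+θ₂(ỹ^k)+θ₃(z̃^k)] + (x-x̃^k)^T(-A^Tλ̃^k) + (y-ỹ^k)^T(-B^Tλ̃^k) + (z-z̃^k)^T(-C^Tλ̃^k)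 + (λ-λ̃^k)^T(Ax̃^k + Bỹ^k + Cz̃^k - b) ≥ (y-ỹ^k)^T βB^TB(y^k-ỹ^k) + (z-z̃^k)^T[βC^TB(y^k-ỹ^k) + βC^TC(z^k-z̃^k)] + (λ-λ̃^k)^T[-B(y^k-ỹ^k) - C(z^k-z̃^k) + (1/β)(λ^k-λ̃^k)]. -/
open Matrix

private lemma limit_aux (K M : ℝ) (hM : 0 ≤ M)
    (h : ∀ t : ℝ, 0 < t → t ≤ 1 → 0 ≤ K + t * M) : 0 ≤ K := by
  by_contra hK
  push_neg at hK
  have hM1 : 0 < M + 1 := by linarith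
  set t : ℝ := min 1 (-K / (M + 1)) with ht
  have ht0 : 0 < t := by
    apply lt_min one_pos
    exact div_pos (by linarith) hM1
  have ht1 : t ≤ 1 := min_le_left _ _
  have h2 : t ≤ -K / (M + 1) := min_le_right _ _
  have h3 := h t ht0 ht1
  have h4 : t * M ≤ (-K / (M + 1)) * M := by
    apply mul_le_mul_of_nonneg_right h2 hM
  have h5 : (-K / (M + 1)) * M < -K := by
    rw [div_mul_eq_mul_div, div_lt_iff₀ hM1]
    nlinarith
  linarith

private lemma vi_quadratic {n m : ℕ}
    (θ : (Fin n → ℝ) → ℝ) (hθ : ConvexOn ℝ Set.univ θ)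
    (S : Set (Fin n → ℝ)) (hS : Convex ℝ S)
    (M : Matrix (Fin m) (Fin n) ℝ) (p : Fin n → ℝ) (c : Fin m → ℝ)
    (β : ℝ) (hβ : 0 < β)
    (s : Fin n → ℝ) (hs : s ∈ S)
    (hmin : ∀ x ∈ S,
      θ s - s ⬝ᵥ p + β / 2 * ((M *ᵥ s + c) ⬝ᵥ (M *ᵥ s + c))
      ≤ θ x - x ⬝ᵥ p + β / 2 * ((M *ᵥ x + c) ⬝ᵥ (M *ᵥ x + c))) :
    ∀ x ∈ S, 0 ≤ θ x - θ s + (x - s) ⬝ᵥ (-p + β • (Mᵀ *ᵥ (M *ᵥ s + c))) := by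
  intro x hx
  set d : Fin n → ℝ := x - s with hd
  set w : Fin m → ℝ := M *ᵥ s + c with hw
  set e : Fin m → ℝ := M *ᵥ d with he
  have key : (x - s) ⬝ᵥ (-p + β • (Mᵀ *ᵥ (M *ᵥ s + c)))
      = -(d ⬝ᵥ p) + β * (w ⬝ᵥ e) := by
    rw [dotProduct_add, dotProduct_neg, dotProduct_smul, ← hd, ← hw]
    have : d ⬝ᵥ (Mᵀ *ᵥ w) = w ⬝ᵥ e := by
      rw [dotProduct_mulVec, vecMul_transpose, dotProduct_comm, he]
    rw [this]; rfl
  rw [key]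
  apply limit_aux _ (β / 2 * (e ⬝ᵥ e))
  · have : 0 ≤ e ⬝ᵥ e := Finset.sum_nonneg fun i _ => mul_self_nonneg _
    positivity
  intro t ht0 ht1
  have hu : s + t • d ∈ S := by
    have := hS hs hx (show (0:ℝ) ≤ 1 - t by linarith) (le_of_lt ht0) (by ring)
    have heq : (1 - t) • s + t • x = s + t • d := by
      rw [hd]; module
    rwa [heq] at this
  have h1 := hmin _ hu
  have hconv : θ (s + t • d) ≤ (1 - t) * θ s + t * θ x := by
    have := hθ.2 (Set.mem_univ s) (Set.mem_univ x)
      (show (0:ℝ) ≤ 1 - t by linarith) (le_of_lt ht0) (by ring)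
    simp only [smul_eq_mul] at this
    have heq : (1 - t) • s + t • x = s + t • d := by rw [hd]; module
    rwa [heq] at this
  have hMu : M *ᵥ (s + t • d) + c = w + t • e := by
    rw [mulVec_add, mulVec_smul, hw, he]; abel
  rw [hMu] at h1
  have hdot : (w + t • e) ⬝ᵥ (w + t • e)
      = w ⬝ᵥ w + 2 * t * (w ⬝ᵥ e) + t ^ 2 * (e ⬝ᵥ e) := by
    simp only [dotProduct_add, add_dotProduct, smul_dotProduct, dotProduct_smul,
      smul_eq_mul, dotProduct_comm e w]
    ring
  rw [hdot] at h1
  have hlin : (s + t • d) ⬝ᵥ p = s ⬝ᵥ p + t * (d ⬝ᵥ p) := by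
    rw [add_dotProduct, smul_dotProduct]; rfl
  rw [hlin] at h1
  -- h1 : θ s - s⬝p + β/2 * (w⬝w) ≤ θ(s+t•d) - (s⬝p + t*(d⬝p)) + β/2*(w⬝w + 2t(w⬝e)+t²(e⬝e))
  -- combine with hconv
  have h2 : 0 ≤ t * (θ x - θ s) - t * (d ⬝ᵥ p) + β / 2 * (2 * t * (w ⬝ᵥ e) + t ^ 2 * (e ⬝ᵥ e)) := by
    nlinarith [h1, hconv]
  have h3 : 0 ≤ t * ((θ x - θ s + (-(d ⬝ᵥ p) + β * (w ⬝ᵥ e))) + t * (β / 2 * (e ⬝ᵥ e))) := by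
    nlinarith [h2]
  nlinarith [h3, ht0, mul_pos ht0 ht0]
/-- Prediction representation of the direct extension of ADMM for three blocks:
one Gauss–Seidel sweep produces `(x̃^k, ỹ^k, z̃^k, λ̃^k)` satisfying the
variational-inequality prediction inequality with prediction matrix
`Q = [[βBᵀB, 0, 0], [βCᵀB, βCᵀC, 0], [-B, -C, (1/β)I]]` acting on
`v = (y, z, λ)`. -/
theorem stmt13 (n₁ n₂ n₃ m : ℕ)
    (θ₁ : (Fin n₁ → ℝ) → ℝ) (θ₂ : (Fin n₂ → ℝ) → ℝ) (θ₃ : (Fin n₃ → ℝ) → ℝ)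
    (hθ₁ : ConvexOn ℝ Set.univ θ₁) (hθ₂ : ConvexOn ℝ Set.univ θ₂)
    (hθ₃ : ConvexOn ℝ Set.univ θ₃)
    (X : Set (Fin n₁ → ℝ)) (Y : Set (Fin n₂ → ℝ)) (Z : Set (Fin n₃ → ℝ))
    (hX : Convex ℝ X) (hY : Convex ℝ Y) (hZ : Convex ℝ Z)
    (A : Matrix (Fin m) (Fin n₁) ℝ) (B : Matrix (Fin m) (Fin n₂) ℝ)
    (C : Matrix (Fin m) (Fin n₃) ℝ) (b : Fin m → ℝ)
    (β : ℝ) (hβ : 0 < β)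
    (yk : Fin n₂ → ℝ) (zk : Fin n₃ → ℝ) (lk : Fin m → ℝ)
    (xt : Fin n₁ → ℝ) (yt : Fin n₂ → ℝ) (zt : Fin n₃ → ℝ) (lt : Fin m → ℝ)
    (hxtX : xt ∈ X)
    (hxt : ∀ x ∈ X,
      θ₁ xt - xt ⬝ᵥ (Aᵀ *ᵥ lk)
        + β / 2 * ((A *ᵥ xt + B *ᵥ yk + C *ᵥ zk - b) ⬝ᵥ (A *ᵥ xt + B *ᵥ yk + C *ᵥ zk - b))
      ≤ θ₁ x - x ⬝ᵥ (Aᵀ *ᵥ lk)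
        + β / 2 * ((A *ᵥ x + B *ᵥ yk + C *ᵥ zk - b) ⬝ᵥ (A *ᵥ x + B *ᵥ yk + C *ᵥ zk - b)))
    (hytY : yt ∈ Y)
    (hyt : ∀ y ∈ Y,
      θ₂ yt - yt ⬝ᵥ (Bᵀ *ᵥ lk)
        + β / 2 * ((A *ᵥ xt + B *ᵥ yt + C *ᵥ zk - b) ⬝ᵥ (A *ᵥ xt + B *ᵥ yt + C *ᵥ zk - b))
      ≤ θ₂ y - y ⬝ᵥ (Bᵀ *ᵥ lk)
        + β / 2 * ((A *ᵥ xt + B *ᵥ y + C *ᵥ zk - b) ⬝ᵥ (A *ᵥ xt + B *ᵥ y + C *ᵥ zk - b)))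
    (hztZ : zt ∈ Z)
    (hzt : ∀ z ∈ Z,
      θ₃ zt - zt ⬝ᵥ (Cᵀ *ᵥ lk)
        + β / 2 * ((A *ᵥ xt + B *ᵥ yt + C *ᵥ zt - b) ⬝ᵥ (A *ᵥ xt + B *ᵥ yt + C *ᵥ zt - b))
      ≤ θ₃ z - z ⬝ᵥ (Cᵀ *ᵥ lk)
        + β / 2 * ((A *ᵥ xt + B *ᵥ yt + C *ᵥ z - b) ⬝ᵥ (A *ᵥ xt + B *ᵥ yt + C *ᵥ z - b)))
    (hlt : lt = lk - β • (A *ᵥ xt + B *ᵥ yk + C *ᵥ zk - b)) :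
    ∀ x ∈ X, ∀ y ∈ Y, ∀ z ∈ Z, ∀ lam : Fin m → ℝ,
      (θ₁ x + θ₂ y + θ₃ z) - (θ₁ xt + θ₂ yt + θ₃ zt)
        + (x - xt) ⬝ᵥ (-(Aᵀ *ᵥ lt)) + (y - yt) ⬝ᵥ (-(Bᵀ *ᵥ lt))
        + (z - zt) ⬝ᵥ (-(Cᵀ *ᵥ lt))
        + (lam - lt) ⬝ᵥ (A *ᵥ xt + B *ᵥ yt + C *ᵥ zt - b)
      ≥ (y - yt) ⬝ᵥ (β • (Bᵀ *ᵥ (B *ᵥ (yk - yt))))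
        + (z - zt) ⬝ᵥ (β • (Cᵀ *ᵥ (B *ᵥ (yk - yt))) + β • (Cᵀ *ᵥ (C *ᵥ (zk - zt))))
        + (lam - lt) ⬝ᵥ (-(B *ᵥ (yk - yt)) - C *ᵥ (zk - zt) + (1 / β) • (lk - lt)) := by

  intro x hx y hy z hz lam
  set q : Fin m → ℝ := A *ᵥ xt + B *ᵥ yk + C *ᵥ zk - b with hq
  -- x-subproblem
  have h1 := vi_quadratic θ₁ hθ₁ X hX A (Aᵀ *ᵥ lk) (B *ᵥ yk + C *ᵥ zk - b) β hβ xt hxtX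
    (by
      intro x' hx'
      have e1 : ∀ v : Fin n₁ → ℝ, A *ᵥ v + (B *ᵥ yk + C *ᵥ zk - b)
          = A *ᵥ v + B *ᵥ yk + C *ᵥ zk - b := fun v => by abel
      simp only [e1]
      exact hxt x' hx') x hx
  have g1 : -(Aᵀ *ᵥ lk) + β • (Aᵀ *ᵥ (A *ᵥ xt + (B *ᵥ yk + C *ᵥ zk - b))) = -(Aᵀ *ᵥ lt) := by
    have e : A *ᵥ xt + (B *ᵥ yk + C *ᵥ zk - b) = q := by rw [hq]; abel
    rw [e, hlt]
    simp only [mulVec_sub, mulVec_smul, smul_sub]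
    abel
  rw [g1] at h1
  -- y-subproblem
  have h2 := vi_quadratic θ₂ hθ₂ Y hY B (Bᵀ *ᵥ lk) (A *ᵥ xt + C *ᵥ zk - b) β hβ yt hytY
    (by
      intro y' hy'
      have e1 : ∀ v : Fin n₂ → ℝ, B *ᵥ v + (A *ᵥ xt + C *ᵥ zk - b)
          = A *ᵥ xt + B *ᵥ v + C *ᵥ zk - b := fun v => by abel
      simp only [e1]
      exact hyt y' hy') y hy
  have g2 : -(Bᵀ *ᵥ lk) + β • (Bᵀ *ᵥ (B *ᵥ yt + (A *ᵥ xt + C *ᵥ zk - b)))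
      = -(Bᵀ *ᵥ lt) - β • (Bᵀ *ᵥ (B *ᵥ (yk - yt))) := by
    have e : B *ᵥ yt + (A *ᵥ xt + C *ᵥ zk - b) = q - B *ᵥ (yk - yt) := by
      rw [hq, mulVec_sub]; abel
    rw [e, hlt]
    simp only [mulVec_sub, mulVec_smul, smul_sub]
    abel
  rw [g2, dotProduct_sub] at h2
  -- z-subproblem
  have h3 := vi_quadratic θ₃ hθ₃ Z hZ C (Cᵀ *ᵥ lk) (A *ᵥ xt + B *ᵥ yt - b) β hβ zt hztZ
    (by
      intro z' hz'
      have e1 : ∀ v : Fin n₃ → ℝ, C *ᵥ v + (A *ᵥ xt + B *ᵥ yt - b)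
          = A *ᵥ xt + B *ᵥ yt + C *ᵥ v - b := fun v => by abel
      simp only [e1]
      exact hzt z' hz') z hz
  have g3 : -(Cᵀ *ᵥ lk) + β • (Cᵀ *ᵥ (C *ᵥ zt + (A *ᵥ xt + B *ᵥ yt - b)))
      = -(Cᵀ *ᵥ lt) - (β • (Cᵀ *ᵥ (B *ᵥ (yk - yt))) + β • (Cᵀ *ᵥ (C *ᵥ (zk - zt)))) := by
    have e : C *ᵥ zt + (A *ᵥ xt + B *ᵥ yt - b) = q - B *ᵥ (yk - yt) - C *ᵥ (zk - zt) := by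
      rw [hq, mulVec_sub, mulVec_sub]; abel
    rw [e, hlt]
    simp only [mulVec_sub, mulVec_smul, smul_sub]
    abel
  rw [g3, dotProduct_sub] at h3
  -- lambda identity
  have g4 : -(B *ᵥ (yk - yt)) - C *ᵥ (zk - zt) + (1 / β) • (lk - lt)
      = A *ᵥ xt + B *ᵥ yt + C *ᵥ zt - b := by
    have e : (1 / β) • (lk - lt) = q := by
      rw [hlt, sub_sub_cancel, smul_smul, one_div, inv_mul_cancel₀ hβ.ne', one_smul]
    rw [e, hq, mulVec_sub, mulVec_sub]
    abel
  rw [g4, ge_iff_le]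
  linarith [h1, h2, h3]
end

section
/- Let p ≥ 1, let A₁, …, A_p be real m-by-n_i matrices each with full column rank, and let β > 0. Let Q_PD be the (n₁+…+n_p+m)-square block matrix whose (i,j) block for 1 ≤ j ≤ i ≤ p is βA_i^TA_j, whose (i,j) block for 1 ≤ i < j ≤ p is 0, whose (i, p+1) block is A_i^T for 1 ≤ i ≤ p, whose (p+1, j) blocks are 0 for 1 ≤ j ≤ p, and whose (p+1, p+1) block is (1/β)I_m. Then Q_PD^T + Q_PD is symmetric positive definite. -/
open Matrix

private lemma dot_self_nonneg' {m : ℕ} (y : Fin m → ℝ) : 0 ≤ y ⬝ᵥ y :=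
  Finset.sum_nonneg fun i _ => mul_self_nonneg (y i)

private lemma dot_self_pos' {m : ℕ} {y : Fin m → ℝ} (hy : y ≠ 0) : 0 < y ⬝ᵥ y := by
  obtain ⟨k, hk⟩ := Function.ne_iff.mp hy
  exact Finset.sum_pos' (fun i _ => mul_self_nonneg (y i))
    ⟨k, Finset.mem_univ k, mul_self_pos.mpr hk⟩

/-- For the primal-dual order multi-block prediction matrix `Q_PD`, whose
`(i,j)` block is `βAᵢᵀAⱼ` for `j ≤ i`, `0` for `i < j ≤ p`, whose `(i, p+1)`
block is `Aᵢᵀ`, whose `(p+1, j)` blocks are `0`, and whose `(p+1, p+1)` block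
is `(1/β)I_m`, the matrix `Q_PDᵀ + Q_PD` is symmetric positive definite
provided every `Aᵢ` has full column rank and `β > 0`. -/
theorem stmt14 (p m : ℕ) (hp : 1 ≤ p) (n : Fin p → ℕ)
    (A : (i : Fin p) → Matrix (Fin m) (Fin (n i)) ℝ)
    (hA : ∀ i, ∀ x : Fin (n i) → ℝ, A i *ᵥ x = 0 → x = 0)
    (β : ℝ) (hβ : 0 < β)
    (Q : Matrix ((Σ i : Fin p, Fin (n i)) ⊕ Fin m) ((Σ i : Fin p, Fin (n i)) ⊕ Fin m) ℝ)
    (hQ1 : ∀ (i j : Fin p) (a : Fin (n i)) (c : Fin (n j)),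
      Q (Sum.inl ⟨i, a⟩) (Sum.inl ⟨j, c⟩) =
        if j ≤ i then β * ((A i)ᵀ * A j) a c else 0)
    (hQ2 : ∀ (i : Fin p) (a : Fin (n i)) (k : Fin m),
      Q (Sum.inl ⟨i, a⟩) (Sum.inr k) = (A i)ᵀ a k)
    (hQ3 : ∀ (k : Fin m) (i : Fin p) (a : Fin (n i)),
      Q (Sum.inr k) (Sum.inl ⟨i, a⟩) = 0)
    (hQ4 : ∀ k k' : Fin m,
      Q (Sum.inr k) (Sum.inr k') = (1 / β) * (1 : Matrix (Fin m) (Fin m) ℝ) k k') :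
    (Qᵀ + Q)ᵀ = Qᵀ + Q
    ∧ ∀ x : (Σ i : Fin p, Fin (n i)) ⊕ Fin m → ℝ, x ≠ 0 →
        0 < x ⬝ᵥ ((Qᵀ + Q) *ᵥ x) := by
  classical
  have hβ0 : β ≠ 0 := ne_of_gt hβ
  refine ⟨by rw [transpose_add, transpose_transpose, add_comm], ?_⟩
  intro x hx
  set u : (i : Fin p) → Fin (n i) → ℝ := fun i a => x (Sum.inl ⟨i, a⟩) with hu
  set v : Fin m → ℝ := fun k => x (Sum.inr k) with hv
  set w : Fin p → Fin m → ℝ := fun i => A i *ᵥ u i with hw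
  set s : Fin m → ℝ := ∑ i, w i with hs
  -- adjoint identity
  have e1 : ∀ (i : Fin p) (y : Fin m → ℝ),
      (∑ a', u i a' * ((A i)ᵀ *ᵥ y) a') = w i ⬝ᵥ y := by
    intro i y
    have h : (∑ a', u i a' * ((A i)ᵀ *ᵥ y) a') = u i ⬝ᵥ ((A i)ᵀ *ᵥ y) := rfl
    rw [h, dotProduct_mulVec, vecMul_transpose]
  have inner1 : ∀ (i j : Fin p) (a' : Fin (n i)),
      (∑ c, ((A i)ᵀ * A j) a' c * u j c) = ((A i)ᵀ *ᵥ w j) a' := by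
    intro i j a'
    have h : (∑ c, ((A i)ᵀ * A j) a' c * u j c) = (((A i)ᵀ * A j) *ᵥ u j) a' := rfl
    rw [h, ← mulVec_mulVec]
  -- block computation of Q *ᵥ x
  have h1 : ∀ (i : Fin p) (a' : Fin (n i)), (Q *ᵥ x) (Sum.inl ⟨i, a'⟩)
      = β * (∑ j, if j ≤ i then ((A i)ᵀ *ᵥ w j) a' else 0) + ((A i)ᵀ *ᵥ v) a' := by
    intro i a'
    have expand : (Q *ᵥ x) (Sum.inl ⟨i, a'⟩)
        = (∑ j, ∑ c, Q (Sum.inl ⟨i, a'⟩) (Sum.inl ⟨j, c⟩) * u j c)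
          + ∑ k, Q (Sum.inl ⟨i, a'⟩) (Sum.inr k) * v k := by
      simp only [mulVec, dotProduct, Fintype.sum_sum_type]
      rw [← Finset.univ_sigma_univ, Finset.sum_sigma]
    rw [expand]
    simp only [hQ1, hQ2]
    congr 1
    · rw [Finset.mul_sum]
      refine Finset.sum_congr rfl fun j _ => ?_
      by_cases hji : j ≤ i
      · simp only [hji, if_true]
        rw [← inner1 i j a', Finset.mul_sum]
        exact Finset.sum_congr rfl fun c _ => by ring
      · simp [hji]
  have h2 : ∀ k : Fin m, (Q *ᵥ x) (Sum.inr k) = (1 / β) * v k := by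
    intro k
    have expand : (Q *ᵥ x) (Sum.inr k)
        = (∑ j, ∑ c, Q (Sum.inr k) (Sum.inl ⟨j, c⟩) * u j c)
          + ∑ k', Q (Sum.inr k) (Sum.inr k') * v k' := by
      simp only [mulVec, dotProduct, Fintype.sum_sum_type]
      rw [← Finset.univ_sigma_univ, Finset.sum_sigma]
    rw [expand]
    simp [hQ3, hQ4, Matrix.one_apply, ite_mul]
  -- key quadratic form identity for Q
  have hkey : x ⬝ᵥ (Q *ᵥ x)
      = β * (∑ i, ∑ j, if j ≤ i then w i ⬝ᵥ w j else 0) + s ⬝ᵥ v + (1/β) * (v ⬝ᵥ v) := by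
    have hblock : ∀ i : Fin p,
        (∑ a', u i a' * ((β * ∑ j, if j ≤ i then ((A i)ᵀ *ᵥ w j) a' else 0)
            + ((A i)ᵀ *ᵥ v) a'))
        = β * (∑ j, if j ≤ i then w i ⬝ᵥ w j else 0) + w i ⬝ᵥ v := by
      intro i
      simp only [mul_add, Finset.sum_add_distrib]
      congr 1
      · calc (∑ a', u i a' * (β * ∑ j, if j ≤ i then ((A i)ᵀ *ᵥ w j) a' else 0))
            = ∑ j, if j ≤ i then β * ∑ a', u i a' * ((A i)ᵀ *ᵥ w j) a' else 0 := by
              simp only [Finset.mul_sum, mul_ite, mul_zero]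
              rw [Finset.sum_comm]
              refine Finset.sum_congr rfl fun j _ => ?_
              by_cases hji : j ≤ i
              · simp only [hji, if_true, Finset.mul_sum]
                exact Finset.sum_congr rfl fun a' _ => by ring
              · simp [hji]
          _ = β * ∑ j, if j ≤ i then w i ⬝ᵥ w j else 0 := by
              rw [Finset.mul_sum]
              refine Finset.sum_congr rfl fun j _ => ?_
              by_cases hji : j ≤ i
              · simp only [hji, if_true]; rw [e1]
              · simp [hji]
      · exact e1 i v
    have hsv : s ⬝ᵥ v = ∑ i, w i ⬝ᵥ v := by
      simp only [hs, dotProduct, Finset.sum_apply, Finset.sum_mul]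
      exact Finset.sum_comm
    have expandQ : x ⬝ᵥ (Q *ᵥ x)
        = (∑ i, ∑ a', u i a' * (Q *ᵥ x) (Sum.inl ⟨i, a'⟩))
          + ∑ k, v k * (Q *ᵥ x) (Sum.inr k) := by
      simp only [dotProduct, Fintype.sum_sum_type]
      rw [← Finset.univ_sigma_univ, Finset.sum_sigma]
    rw [expandQ]
    simp only [h1, h2]
    rw [hsv]
    have hvv : (∑ k, v k * (1 / β * v k)) = (1/β) * (v ⬝ᵥ v) := by
      rw [dotProduct, Finset.mul_sum]
      exact Finset.sum_congr rfl fun k _ => by ring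
    rw [hvv]
    simp only [hblock]
    rw [Finset.sum_add_distrib, ← Finset.mul_sum]
  -- doubling
  have hsym2 : x ⬝ᵥ ((Qᵀ + Q) *ᵥ x) = 2 * (x ⬝ᵥ (Q *ᵥ x)) := by
    rw [add_mulVec, dotProduct_add, dotProduct_mulVec, vecMul_transpose, dotProduct_comm]
    ring
  -- triangular identity
  have tri : 2 * (∑ i, ∑ j, if j ≤ i then w i ⬝ᵥ w j else 0)
      = s ⬝ᵥ s + ∑ i, w i ⬝ᵥ w i := by
    have hswap : (∑ i, ∑ j, if j ≤ i then w i ⬝ᵥ w j else 0)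
        = ∑ i, ∑ j, if i ≤ j then w i ⬝ᵥ w j else 0 := by
      rw [Finset.sum_comm]
      refine Finset.sum_congr rfl fun i _ => Finset.sum_congr rfl fun j _ => ?_
      by_cases h : i ≤ j <;> simp [h, dotProduct_comm]
    have hsl : ∀ y : Fin m → ℝ, s ⬝ᵥ y = ∑ i, w i ⬝ᵥ y := by
      intro y
      simp only [hs, dotProduct, Finset.sum_apply, Finset.sum_mul]
      exact Finset.sum_comm
    have hsr : ∀ i : Fin p, w i ⬝ᵥ s = ∑ j, w i ⬝ᵥ w j := by
      intro i
      simp only [hs, dotProduct, Finset.sum_apply, Finset.mul_sum]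
      exact Finset.sum_comm
    have hss : s ⬝ᵥ s = ∑ i, ∑ j, w i ⬝ᵥ w j := by
      rw [hsl s]
      exact Finset.sum_congr rfl fun i _ => hsr i
    rw [two_mul]
    nth_rewrite 2 [hswap]
    rw [← Finset.sum_add_distrib]
    simp only [← Finset.sum_add_distrib]
    rw [hss]
    have hper : ∀ i : Fin p, (∑ j, ((if j ≤ i then w i ⬝ᵥ w j else 0)
        + (if i ≤ j then w i ⬝ᵥ w j else 0)))
        = (∑ j, w i ⬝ᵥ w j) + w i ⬝ᵥ w i := by
      intro i
      have hterm : ∀ j : Fin p, ((if j ≤ i then w i ⬝ᵥ w j else 0)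
          + (if i ≤ j then w i ⬝ᵥ w j else 0))
          = w i ⬝ᵥ w j + (if i = j then w i ⬝ᵥ w j else 0) := by
        intro j
        rcases lt_trichotomy i j with h | h | h
        · simp [le_of_lt h, not_le.mpr h, ne_of_lt h]
        · simp [h]
        · simp [le_of_lt h, not_le.mpr h, (ne_of_lt h).symm]
      simp only [hterm, Finset.sum_add_distrib, Finset.sum_ite_eq, Finset.mem_univ, if_true]
    simp only [hper, Finset.sum_add_distrib]
  -- main value identity
  have main : x ⬝ᵥ ((Qᵀ + Q) *ᵥ x)
      = β * ((s + β⁻¹ • v) ⬝ᵥ (s + β⁻¹ • v)) + β * (∑ i, w i ⬝ᵥ w i) + (1/β) * (v ⬝ᵥ v) := by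
    have hz : (s + β⁻¹ • v) ⬝ᵥ (s + β⁻¹ • v)
        = s ⬝ᵥ s + 2 * β⁻¹ * (s ⬝ᵥ v) + β⁻¹ * β⁻¹ * (v ⬝ᵥ v) := by
      simp only [add_dotProduct, dotProduct_add, smul_dotProduct, dotProduct_smul,
        dotProduct_comm v s, smul_eq_mul]
      ring
    have hinv : β * β⁻¹ = 1 := mul_inv_cancel₀ hβ0
    rw [hsym2, hkey, hz]
    linear_combination β * tri - (2 * (s ⬝ᵥ v) + β⁻¹ * (v ⬝ᵥ v)) * hinv
  rw [main]
  have t1 : 0 ≤ β * ((s + β⁻¹ • v) ⬝ᵥ (s + β⁻¹ • v)) :=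
    mul_nonneg hβ.le (dot_self_nonneg' _)
  by_cases hv0 : v = 0
  · -- some block of x is nonzero
    obtain ⟨r, hr⟩ := Function.ne_iff.mp hx
    have hwex : ∃ i, w i ≠ 0 := by
      rcases r with (⟨i, a⟩ | k)
      · refine ⟨i, fun hwi => ?_⟩
        have := hA i (u i) hwi
        exact hr (by simpa using congrFun this a)
      · exact absurd (by simpa using congrFun hv0 k) hr
    obtain ⟨i, hi⟩ := hwex
    have t2 : 0 < β * (∑ i, w i ⬝ᵥ w i) :=
      mul_pos hβ (Finset.sum_pos' (fun j _ => dot_self_nonneg' _)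
        ⟨i, Finset.mem_univ i, dot_self_pos' hi⟩)
    have t3 : 0 ≤ (1/β) * (v ⬝ᵥ v) :=
      mul_nonneg (by positivity) (dot_self_nonneg' _)
    linarith
  · have t2 : 0 ≤ β * (∑ i, w i ⬝ᵥ w i) :=
      mul_nonneg hβ.le (Finset.sum_nonneg fun j _ => dot_self_nonneg' _)
    have t3 : 0 < (1/β) * (v ⬝ᵥ v) :=
      mul_pos (by positivity) (dot_self_pos' hv0)
    linarith
end

section
/- Let p ≥ 1, ν ∈ (0,1), let I (boldface) denote the pm-by-pm identity and E = (I_m, …, I_m) the m-by-pm block row matrix. Then the (p+1)m-square block matrix G_PD = [[(1-ν)I + E^T E, E^T], [E, I_m]] is symmetric positive definite. (G_PD equals (Q_PD^T + Q_PD) - D_PD, where Q_PD = [[L, E^T],[0, I_m]] and D_PD = [[νI, 0],[0, I_m]].) -/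
open Matrix

theorem aux_self_nonneg {k : Type*} [Fintype k] (w : k → ℝ) : 0 ≤ w ⬝ᵥ w :=
  Finset.sum_nonneg fun i _ => mul_self_nonneg (w i)

/-- For `ν ∈ (0,1)`, the block matrix
`G_PD = [[(1-ν)I + EᵀE, Eᵀ], [E, I_m]]` is symmetric positive definite;
it equals `(Q_PDᵀ + Q_PD) - D_PD` for `Q_PD = [[L, Eᵀ], [0, I_m]]` and
`D_PD = [[νI, 0], [0, I_m]]`. -/
theorem stmt18 (p m : ℕ) (hp : 1 ≤ p) (ν : ℝ) (hν : ν ∈ Set.Ioo (0 : ℝ) 1)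
    (L : Matrix (Fin p × Fin m) (Fin p × Fin m) ℝ)
    (E : Matrix (Fin m) (Fin p × Fin m) ℝ)
    (hL : ∀ (i j : Fin p) (a c : Fin m),
      L (i, a) (j, c) = if j ≤ i then (1 : Matrix (Fin m) (Fin m) ℝ) a c else 0)
    (hE : ∀ (a : Fin m) (j : Fin p) (c : Fin m),
      E a (j, c) = (1 : Matrix (Fin m) (Fin m) ℝ) a c)
    (G : Matrix ((Fin p × Fin m) ⊕ Fin m) ((Fin p × Fin m) ⊕ Fin m) ℝ)
    (hG : G = Matrix.fromBlocks ((1 - ν) • 1 + Eᵀ * E) Eᵀ E 1) :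
    (Gᵀ = G ∧ ∀ x : (Fin p × Fin m) ⊕ Fin m → ℝ, x ≠ 0 → 0 < x ⬝ᵥ (G *ᵥ x))
    ∧ G = ((Matrix.fromBlocks L Eᵀ 0 1)ᵀ + Matrix.fromBlocks L Eᵀ 0 1)
          - Matrix.fromBlocks (ν • 1) 0 0 1 := by
  obtain ⟨hν0, hν1⟩ := hν
  refine ⟨⟨?_, ?_⟩, ?_⟩
  · subst hG
    simp [fromBlocks_transpose, transpose_add, transpose_smul, transpose_mul]
  · intro x hx
    subst hG
    set u : Fin p × Fin m → ℝ := x ∘ Sum.inl with hu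
    set v : Fin m → ℝ := x ∘ Sum.inr with hv
    have hxe : x = Sum.elim u v := by
      funext i; cases i <;> rfl
    have key : x ⬝ᵥ (Matrix.fromBlocks ((1 - ν) • 1 + Eᵀ * E) Eᵀ E 1 *ᵥ x)
        = (1 - ν) * (u ⬝ᵥ u) + (E *ᵥ u + v) ⬝ᵥ (E *ᵥ u + v) := by
      rw [hxe, fromBlocks_mulVec, sumElim_dotProduct_sumElim]
      simp only [Sum.elim_comp_inl, Sum.elim_comp_inr, add_mulVec, smul_mulVec,
        one_mulVec, ← mulVec_mulVec, dotProduct_add, dotProduct_smul, smul_eq_mul,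
        add_dotProduct]
      have h1 : u ⬝ᵥ (Eᵀ *ᵥ (E *ᵥ u)) = (E *ᵥ u) ⬝ᵥ (E *ᵥ u) := by
        rw [Matrix.dotProduct_mulVec, vecMul_transpose]
      have h2 : u ⬝ᵥ (Eᵀ *ᵥ v) = (E *ᵥ u) ⬝ᵥ v := by
        rw [Matrix.dotProduct_mulVec, vecMul_transpose]
      rw [h1, h2, dotProduct_comm v (E *ᵥ u)]
      ring
    rw [key]
    by_cases hu0 : u = 0
    · have hv0 : v ≠ 0 := by
        intro h
        apply hx
        rw [hxe, hu0, h]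
        funext i; cases i <;> rfl
      have : (E *ᵥ u + v) = v := by rw [hu0, mulVec_zero, zero_add]
      rw [this, hu0]
      have : 0 < v ⬝ᵥ v := by
        rcases lt_or_eq_of_le (aux_self_nonneg v) with h | h
        · exact h
        · exact absurd ((dotProduct_self_eq_zero).mp h.symm) hv0
      simpa using this
    · have h1 : 0 < u ⬝ᵥ u := by
        rcases lt_or_eq_of_le (aux_self_nonneg u) with h | h
        · exact h
        · exact absurd ((dotProduct_self_eq_zero).mp h.symm) hu0
      have h2 : 0 ≤ (E *ᵥ u + v) ⬝ᵥ (E *ᵥ u + v) := aux_self_nonneg _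
      have : 0 < (1 - ν) * (u ⬝ᵥ u) := mul_pos (by linarith) h1
      linarith
  · subst hG
    rw [fromBlocks_transpose]
    ext i j
    cases i with
    | inl i =>
      cases j with
      | inl j =>
        obtain ⟨i, a⟩ := i
        obtain ⟨j, c⟩ := j
        simp only [fromBlocks_apply₁₁, Matrix.add_apply, Matrix.sub_apply,
          Matrix.smul_apply, Matrix.mul_apply, transpose_apply, smul_eq_mul]
        have hEE : ∑ b, E b (i, a) * E b (j, c)
            = (1 : Matrix (Fin m) (Fin m) ℝ) a c := by
          simp only [hE, Matrix.one_apply]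
          rw [Finset.sum_eq_single a]
          · simp [eq_comm]
          · intro b _ hb
            simp [hb]
          · simp
        have hsym : (1 : Matrix (Fin m) (Fin m) ℝ) c a
            = (1 : Matrix (Fin m) (Fin m) ℝ) a c := by
          simp [Matrix.one_apply, eq_comm]
        rw [hEE, hL, hL, hsym]
        have h1 : (1 : Matrix (Fin p × Fin m) (Fin p × Fin m) ℝ) (i, a) (j, c)
            = (if i = j then (1 : ℝ) else 0) * (1 : Matrix (Fin m) (Fin m) ℝ) a c := by
          simp only [Matrix.one_apply, Prod.mk.injEq]
          by_cases h : i = j <;> by_cases h' : a = c <;> simp [h, h']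
        rw [h1]
        rcases le_or_gt i j with h | h
        · rcases lt_or_eq_of_le h with h' | h'
          · simp only [h, if_true, not_le.mpr h', if_false, h'.ne, if_neg h'.ne]
            ring
          · simp only [h', le_refl, if_true, if_pos rfl]
            ring
        · simp only [le_of_lt h, if_true, not_le.mpr h, if_false, if_neg h.ne']
          ring
      | inr j => simp
    | inr i =>
      cases j with
      | inl j => simp
      | inr j => simp [Matrix.one_apply]
end

section
/- Let p ≥ 1, ν ∈ (0,1), let I (boldface) denote the pm-by-pm identity, E = (I_m, …, I_m) the m-by-pm block row matrix, and L the pm-by-pm block lower triangular matrix with I_m blocks on and below the diagonal. Let Q_DP = [[L, 0], [-E, I_m]] and D_DP = [[νI + E^T E, -E^T], [-E, I_m]]. Then: (i) D_DP is symmetric positive definite; and (ii) Q_DP is invertible with Q_DP^{-T} D_DP = [[ν L^{-T}, 0], [-E, I_m]]. -/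
open Matrix Kronecker

/-- For `ν ∈ (0,1)`, the dual-primal prediction matrix
`Q_DP = [[L, 0], [-E, I_m]]` and `D_DP = [[νI + EᵀE, -Eᵀ], [-E, I_m]]`:
(i) `D_DP` is symmetric positive definite; (ii) `Q_DP` is invertible with
`Q_DP⁻ᵀ D_DP = [[νL⁻ᵀ, 0], [-E, I_m]]`. -/
theorem stmt19 (p m : ℕ) (hp : 1 ≤ p) (ν : ℝ) (hν : ν ∈ Set.Ioo (0 : ℝ) 1)
    (L : Matrix (Fin p × Fin m) (Fin p × Fin m) ℝ)
    (E : Matrix (Fin m) (Fin p × Fin m) ℝ)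
    (hL : ∀ (i j : Fin p) (a c : Fin m),
      L (i, a) (j, c) = if j ≤ i then (1 : Matrix (Fin m) (Fin m) ℝ) a c else 0)
    (hE : ∀ (a : Fin m) (j : Fin p) (c : Fin m),
      E a (j, c) = (1 : Matrix (Fin m) (Fin m) ℝ) a c)
    (Q D : Matrix ((Fin p × Fin m) ⊕ Fin m) ((Fin p × Fin m) ⊕ Fin m) ℝ)
    (hQ : Q = Matrix.fromBlocks L 0 (-E) 1)
    (hD : D = Matrix.fromBlocks (ν • 1 + Eᵀ * E) (-Eᵀ) (-E) 1) :
    (Dᵀ = D ∧ ∀ x : (Fin p × Fin m) ⊕ Fin m → ℝ, x ≠ 0 → 0 < x ⬝ᵥ (D *ᵥ x))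
    ∧ IsUnit Q
    ∧ (Qᵀ)⁻¹ * D = Matrix.fromBlocks (ν • (Lᵀ)⁻¹) 0 (-E) 1 := by
  obtain ⟨hν0, hν1⟩ := hν
  -- L is a Kronecker product of a triangular matrix with the identity
  set T : Matrix (Fin p) (Fin p) ℝ := Matrix.of fun i j => if j ≤ i then 1 else 0 with hT
  have hLk : L = T ⊗ₖ (1 : Matrix (Fin m) (Fin m) ℝ) := by
    ext ⟨i, a⟩ ⟨j, c⟩
    simp only [hL i j a c, kroneckerMap_apply, hT, Matrix.of_apply]
    split_ifs <;> simp
  have hdetT : T.det = 1 := by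
    rw [Matrix.det_of_lowerTriangular T ?_]
    · simp [hT]
    · intro i j h
      simp only [OrderDual.toDual_lt_toDual] at h
      simp only [hT, Matrix.of_apply, if_neg (not_le.2 h)]
  have hdetL : L.det = 1 := by
    rw [hLk, Matrix.det_kronecker, hdetT, Matrix.det_one]; simp
  have hLdu : IsUnit L.det := by rw [hdetL]; exact isUnit_one
  have hLTdu : IsUnit Lᵀ.det := by rwa [Matrix.det_transpose]
  have hLTinv : Lᵀ * (Lᵀ)⁻¹ = 1 := Matrix.mul_nonsing_inv _ hLTdu
  have hdetQ : Q.det = 1 := by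
    rw [hQ, Matrix.det_fromBlocks_zero₁₂, hdetL, Matrix.det_one, mul_one]
  have hQu : IsUnit Q := (Matrix.isUnit_iff_isUnit_det Q).2 (by rw [hdetQ]; exact isUnit_one)
  have hQTdu : IsUnit Qᵀ.det := by rw [Matrix.det_transpose, hdetQ]; exact isUnit_one
  refine ⟨⟨?_, ?_⟩, hQu, ?_⟩
  · -- symmetry
    rw [hD]
    simp [Matrix.fromBlocks_transpose, Matrix.transpose_add, Matrix.transpose_smul,
      Matrix.transpose_mul, Matrix.transpose_neg, Matrix.transpose_one,
      Matrix.transpose_transpose]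
  · -- positive definiteness
    intro x hx
    set u := x ∘ Sum.inl with hu
    set v := x ∘ Sum.inr with hv
    have hx' : x = Sum.elim u v := by ext i; cases i <;> rfl
    have key : x ⬝ᵥ (D *ᵥ x) = ν * (u ⬝ᵥ u) + (E *ᵥ u - v) ⬝ᵥ (E *ᵥ u - v) := by
      rw [hD, hx', Matrix.fromBlocks_mulVec, sumElim_dotProduct_sumElim]
      simp only [Sum.elim_comp_inl, Sum.elim_comp_inr, Matrix.add_mulVec,
        Matrix.neg_mulVec, Matrix.smul_mulVec, Matrix.one_mulVec,
        dotProduct_add, dotProduct_neg, dotProduct_smul, sub_dotProduct,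
        dotProduct_sub, ← Matrix.mulVec_mulVec, Matrix.dotProduct_mulVec,
        Matrix.vecMul_transpose, smul_eq_mul]
      simp only [Matrix.sub_vecMul, sub_dotProduct, ← Matrix.dotProduct_mulVec]
      rw [dotProduct_comm v (E *ᵥ u)]
      ring
    rw [key]
    have h2 : 0 ≤ (E *ᵥ u - v) ⬝ᵥ (E *ᵥ u - v) :=
      Finset.sum_nonneg fun i _ => mul_self_nonneg _
    rcases eq_or_ne u 0 with h | h
    · have hv0 : v ≠ 0 := by
        intro hv0
        apply hx
        rw [hx', h, hv0]; ext i; cases i <;> rfl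
      have h3 : (E *ᵥ u - v) ⬝ᵥ (E *ᵥ u - v) > 0 := by
        rcases lt_or_eq_of_le h2 with h3 | h3
        · exact h3
        · exfalso
          apply hv0
          have := dotProduct_self_eq_zero.1 h3.symm
          rw [h, Matrix.mulVec_zero, zero_sub, neg_eq_zero] at this
          exact this
      rw [h] at h3
      rw [h, dotProduct_zero]
      linarith
    · have h1 : 0 < u ⬝ᵥ u := by
        rcases lt_or_eq_of_le (Finset.sum_nonneg fun i _ => mul_self_nonneg (u i) : (0:ℝ) ≤ u ⬝ᵥ u) with h3 | h3
        · exact h3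
        · exact absurd (dotProduct_self_eq_zero.1 h3.symm) h
      nlinarith
  · -- the product identity
    have key : Qᵀ * Matrix.fromBlocks (ν • (Lᵀ)⁻¹) 0 (-E) 1 = D := by
      rw [hQ, hD, Matrix.fromBlocks_transpose, Matrix.fromBlocks_multiply]
      simp [Matrix.mul_smul, hLTinv]
    rw [← key, ← Matrix.mul_assoc, Matrix.nonsing_inv_mul _ hQTdu, Matrix.one_mul]
end
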